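/- arXiv:2212.05149 — 7 statements merged into one kernel-verified Lean document; each statement's English description precedes it below -/
import Mathlib

section
/- Let Z be a real-valued random variable with CDF F satisfying E|Z|^p < ∞ for some p > 2. Then ∫_{−∞}^{+∞} √(F(z)(1 − F(z))) dz ≤ (2p/(p−2)) (E|Z|^p)^{1/p}. -/
/-! The integrand is at most `1`, and since `F (1 - F) ≤ min (F, 1 - F) ≤ P(|Z| ≥ |z|)`, Markov's
inequality for `|Z|ᵖ` bounds it by `√(E|Z|ᵖ) |z|^(-p/2)`. Using the first bound on `[-c, c]` and
the second outside gives `2c + 4 √(E|Z|ᵖ) c^(1 - p/2) / (p - 2)`, which is the claim at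
`c = (E|Z|ᵖ)^(1/p)`; when `E|Z|ᵖ = 0`, letting `c → 0` shows the integral vanishes. -/

open MeasureTheory ProbabilityTheory Set

theorem lintegral_compl_Icc_comp_abs (φ : ℝ → ENNReal) {c : ℝ} (hc : 0 ≤ c) :
    ∫⁻ z in (Icc (-c) c)ᶜ, φ |z| = 2 * ∫⁻ x in Ioi c, φ x := by
  have hcompl : (Icc (-c) c)ᶜ = Iio (-c) ∪ Ioi c := by
    ext z
    simp only [mem_compl_iff, mem_Icc, not_and_or, not_le, mem_union, mem_Iio, mem_Ioi]
  have hpos : ∫⁻ z in Ioi c, φ |z| = ∫⁻ x in Ioi c, φ x :=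
    setLIntegral_congr_fun measurableSet_Ioi fun x hx => by rw [abs_of_pos (hc.trans_lt hx)]
  have hneg : ∫⁻ z in Iio (-c), φ |z| = ∫⁻ z in Ioi c, φ |z| := by
    rw [← lintegral_indicator measurableSet_Iio, ← lintegral_indicator measurableSet_Ioi,
      ← lintegral_neg_eq_self]
    congr 1
    ext z
    simp [indicator]
  rw [hcompl, lintegral_union measurableSet_Ioi (Ioi_disjoint_Iio_of_le (neg_le_self hc)).symm,
    hneg, hpos, two_mul]

theorem lintegral_Ioi_ofReal_mul_rpow {K q c : ℝ} (hK : 0 ≤ K) (hq : 1 < q) (hc : 0 < c) :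
    ∫⁻ x in Ioi c, ENNReal.ofReal (K * x ^ (-q)) = ENNReal.ofReal (K * c ^ (1 - q) / (q - 1)) := by
  have hq' : -q < -1 := by linarith
  rw [← ofReal_integral_eq_lintegral_ofReal ((integrableOn_Ioi_rpow_of_lt hq' hc).const_mul K)]
  · rw [integral_const_mul, integral_Ioi_rpow_of_lt hq' hc]
    congr 1
    rw [show -q + 1 = 1 - q by ring, neg_div, ← div_neg, neg_sub, mul_div_assoc]
  · filter_upwards [ae_restrict_mem measurableSet_Ioi] with x hx
    exact mul_nonneg hK (Real.rpow_nonneg (hc.trans hx).le _)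

theorem lintegral_ofReal_le_of_le_one_of_le_mul_rpow_abs {f : ℝ → ℝ} {K q c : ℝ} (hK : 0 ≤ K)
    (hq : 1 < q) (hc : 0 < c) (hf_one : ∀ z, f z ≤ 1)
    (hf_tail : ∀ z, c < |z| → f z ≤ K * |z| ^ (-q)) :
    ∫⁻ z, ENNReal.ofReal (f z) ≤ ENNReal.ofReal (2 * c + 2 * (K * c ^ (1 - q) / (q - 1))) := by
  have htail_nonneg : 0 ≤ K * c ^ (1 - q) / (q - 1) :=
    div_nonneg (mul_nonneg hK (Real.rpow_nonneg hc.le _)) (by linarith)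
  calc ∫⁻ z, ENNReal.ofReal (f z)
      = (∫⁻ z in Icc (-c) c, ENNReal.ofReal (f z)) +
          ∫⁻ z in (Icc (-c) c)ᶜ, ENNReal.ofReal (f z) :=
        (lintegral_add_compl _ measurableSet_Icc).symm
    _ ≤ (∫⁻ _ in Icc (-c) c, 1) + ∫⁻ z in (Icc (-c) c)ᶜ, ENNReal.ofReal (K * |z| ^ (-q)) := by
        refine add_le_add (setLIntegral_mono measurable_const fun z _ => ?_)
          (setLIntegral_mono (by fun_prop) fun z hz => ?_)
        · exact ENNReal.ofReal_le_one.2 (hf_one z)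
        · refine ENNReal.ofReal_le_ofReal (hf_tail z ?_)
          simp only [mem_compl_iff, mem_Icc, not_and_or, not_le] at hz
          rcases hz with hz | hz
          · exact lt_abs.2 (Or.inr (by linarith))
          · exact lt_abs.2 (Or.inl hz)
    _ = ENNReal.ofReal (2 * c) + 2 * ENNReal.ofReal (K * c ^ (1 - q) / (q - 1)) := by
        rw [setLIntegral_const, one_mul, Real.volume_Icc, sub_neg_eq_add, ← two_mul,
          lintegral_compl_Icc_comp_abs (fun x => ENNReal.ofReal (K * x ^ (-q))) hc.le,
          lintegral_Ioi_ofReal_mul_rpow hK hq hc]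
    _ = ENNReal.ofReal (2 * c + 2 * (K * c ^ (1 - q) / (q - 1))) := by
        rw [ENNReal.ofReal_add (by positivity) (by positivity),
          ENNReal.ofReal_mul (q := K * c ^ (1 - q) / (q - 1)) zero_le_two, ENNReal.ofReal_ofNat]

section Probability

variable {Ω : Type*} [MeasurableSpace Ω] {μ : Measure Ω} {Z : Ω → ℝ}

theorem measureReal_abs_ge_le_integral_rpow_div [IsFiniteMeasure μ] {p c : ℝ} (hp : 0 ≤ p)
    (hc : 0 < c) (hint : Integrable (fun ω => |Z ω| ^ p) μ) :
    μ.real {ω | c ≤ |Z ω|} ≤ (∫ ω, |Z ω| ^ p ∂μ) / c ^ p := by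
  rw [le_div_iff₀' (Real.rpow_pos_of_pos hc p)]
  calc c ^ p * μ.real {ω | c ≤ |Z ω|} ≤ c ^ p * μ.real {ω | c ^ p ≤ |Z ω| ^ p} :=
        mul_le_mul_of_nonneg_left
          (measureReal_mono fun ω h => Real.rpow_le_rpow hc.le h hp) (by positivity)
    _ ≤ ∫ ω, |Z ω| ^ p ∂μ :=
        mul_meas_ge_le_integral_of_nonneg (ae_of_all _ fun ω => by positivity) hint _

theorem cdf_mul_one_sub_le_measureReal_abs_ge [IsProbabilityMeasure μ] (hZ : Measurable Z)
    {F : ℝ → ℝ} (hF : ∀ z, F z = μ.real {ω | Z ω ≤ z}) (z : ℝ) :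
    F z * (1 - F z) ≤ μ.real {ω | |z| ≤ |Z ω|} := by
  have hF0 : 0 ≤ F z := hF z ▸ measureReal_nonneg
  have hF1 : F z ≤ 1 := hF z ▸ measureReal_le_one
  rcases le_or_gt z 0 with hz | hz
  · calc F z * (1 - F z) ≤ F z := mul_le_of_le_one_right hF0 (by linarith)
      _ ≤ μ.real {ω | |z| ≤ |Z ω|} := hF z ▸ measureReal_mono fun ω (h : Z ω ≤ z) => by
          show |z| ≤ |Z ω|
          rw [abs_of_nonpos hz]
          exact (neg_le_neg h).trans (neg_le_abs _)
  · calc F z * (1 - F z) ≤ 1 - F z := mul_le_of_le_one_left (by linarith) hF1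
      _ = μ.real {ω | Z ω ≤ z}ᶜ := by
        rw [hF]
        exact (probReal_compl_eq_one_sub (hZ measurableSet_Iic)).symm
      _ ≤ μ.real {ω | |z| ≤ |Z ω|} := measureReal_mono fun ω (h : ¬ Z ω ≤ z) => by
          show |z| ≤ |Z ω|
          rw [abs_of_pos hz]
          exact (not_le.1 h).le.trans (le_abs_self _)

theorem sqrt_cdf_mul_one_sub_le_mul_rpow_abs [IsProbabilityMeasure μ] (hZ : Measurable Z)
    {F : ℝ → ℝ} (hF : ∀ z, F z = μ.real {ω | Z ω ≤ z}) {p : ℝ} (hp : 0 ≤ p)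
    (hint : Integrable (fun ω => |Z ω| ^ p) μ) {z : ℝ} (hz : z ≠ 0) :
    √(F z * (1 - F z)) ≤ √(∫ ω, |Z ω| ^ p ∂μ) * |z| ^ (-(p / 2)) := by
  have hz' : 0 < |z| := abs_pos.2 hz
  calc √(F z * (1 - F z)) ≤ √((∫ ω, |Z ω| ^ p ∂μ) / |z| ^ p) :=
        Real.sqrt_le_sqrt ((cdf_mul_one_sub_le_measureReal_abs_ge hZ hF z).trans
          (measureReal_abs_ge_le_integral_rpow_div hp hz' hint))
    _ = √(∫ ω, |Z ω| ^ p ∂μ) * |z| ^ (-(p / 2)) := by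
        rw [Real.sqrt_div' _ (Real.rpow_nonneg hz'.le p), Real.rpow_neg hz'.le, div_eq_mul_inv,
          Real.sqrt_eq_rpow (|z| ^ p), ← Real.rpow_mul hz'.le, mul_one_div]

end Probability

/-- If `Z` is a real random variable with CDF `F` and `E|Z|ᵖ < ∞` for some
`p > 2`, then `∫_ℝ √(F(z)(1−F(z))) dz ≤ (2p/(p−2)) (E|Z|ᵖ)^{1/p}`. -/
theorem stmt3
    {Ωs : Type*} [MeasureSpace Ωs] [IsProbabilityMeasure (ℙ : Measure Ωs)]
    (Z : Ωs → ℝ) (hmeas : Measurable Z)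
    (F : ℝ → ℝ) (hF : ∀ z, F z = ((ℙ : Measure Ωs) {ω | Z ω ≤ z}).toReal)
    (p : ℝ) (hp : 2 < p)
    (hmom : Integrable (fun ω => |Z ω| ^ p) ℙ) :
    ∫⁻ z : ℝ, ENNReal.ofReal (Real.sqrt (F z * (1 - F z))) ≤
      ENNReal.ofReal ((2 * p / (p - 2)) * (∫ ω : Ωs, |Z ω| ^ p ∂ℙ) ^ (1 / p)) := by
  set I := ∫ ω, |Z ω| ^ p ∂ℙ
  have hbound : ∀ c, 0 < c → ∫⁻ z, ENNReal.ofReal √(F z * (1 - F z)) ≤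
      ENNReal.ofReal (2 * c + 2 * (√I * c ^ (1 - p / 2) / (p / 2 - 1))) := fun c hc =>
    lintegral_ofReal_le_of_le_one_of_le_mul_rpow_abs (Real.sqrt_nonneg I) (by linarith) hc
      (fun z => Real.sqrt_le_one.2 ((cdf_mul_one_sub_le_measureReal_abs_ge hmeas hF z).trans
        measureReal_le_one))
      (fun z hz => sqrt_cdf_mul_one_sub_le_mul_rpow_abs hmeas hF (by linarith) hmom
        (abs_pos.1 (hc.trans hz)))
  have hI0 : 0 ≤ I := integral_nonneg fun ω => by positivity
  rcases hI0.eq_or_lt with hI | hI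
  · rw [← hI, Real.zero_rpow (by positivity), mul_zero, ENNReal.ofReal_zero]
    refine ENNReal.le_of_forall_pos_le_add fun ε hε _ => ?_
    have hε2 := hbound (ε / 2) (by positivity)
    rw [zero_add]
    rwa [← hI, Real.sqrt_zero, zero_mul, zero_div, mul_zero, add_zero,
      mul_div_cancel₀ _ two_ne_zero, ENNReal.ofReal_coe_nnreal] at hε2
  · have hscale : √I * (I ^ (1 / p)) ^ (1 - p / 2) = I ^ (1 / p) := by
      rw [Real.sqrt_eq_rpow, ← Real.rpow_mul hI.le, ← Real.rpow_add hI]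
      congr 1
      field_simp
      ring
    convert hbound (I ^ (1 / p)) (by positivity) using 2
    have hp2 : p - 2 ≠ 0 := by linarith
    rw [hscale]
    field_simp
    ring
end

section
/- Let ℓ_1, ..., ℓ_n : ℝ^d → ℝ be convex functions and let 0 ≤ σ_1 ≤ ... ≤ σ_n with Σ_{i=1}^n σ_i = 1. Then the spectral risk R_σ(w) := Σ_{i=1}^n σ_i ℓ_{(i)}(w) is convex, and its subdifferential at any w ∈ ℝ^d equals ∂R_σ(w) = conv( ⋃_{π ∈ argsort(ℓ(w))} Σ_{i=1}^n σ_i ∂ℓ_{π(i)}(w) ), where argsort(ℓ(w)) := {π a permutation of {1,...,n} : ℓ_{π(1)}(w) ≤ ... ≤ ℓ_{π(n)}(w)}, the inner sum is a Minkowski sum of sets, and conv denotes the convex hull. Moreover, if each ℓ_i is G-Lipschitz continuous, then R_σ is G-Lipschitz continuous. -/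
/-!
Since `σ` is non-decreasing, the rearrangement inequality makes `R_σ` the maximum over
permutations `π` of `∑ σᵢ ℓ_{π(i)}`, attained at every `π` sorting `ℓ(w)`. This gives convexity,
the Lipschitz bound, and the inclusion of each `∑ σᵢ ∂ℓ_{π(i)}(w)`, `π ∈ argsort(ℓ(w))`, in
`∂R_σ(w)`.

For the converse, the convex hull `C` of these sets is compact, so by separation it suffices to
bound `⟪g, u⟫` by `max_{c ∈ C} ⟪c, u⟫` for every subgradient `g` of `R_σ` and direction `u`.
Now `⟪g, u⟫ ≤ R_σ'(w; u)`. Some permutation `π` sorts `ℓ(w + t u)` for arbitrarily small `t > 0`;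
by continuity it sorts `ℓ(w)`, and passing to the limit along these `t` gives
`R_σ'(w; u) ≤ ∑ σᵢ ℓ_{π(i)}'(w; u)`. Finally the max formula
`ℓ'(w; u) = max_{h ∈ ∂ℓ(w)} ⟪h, u⟫`, which is Hahn–Banach for the sublinear function `ℓ'(w; ·)`,
turns the right-hand side into `⟪c, u⟫` for some `c ∈ C`.
-/

open scoped RealInnerProductSpace NNReal

/-- The convex-analytic subdifferential of `f : ℝ^d → ℝ` at `w`. -/
def subdiff {d : ℕ} (f : EuclideanSpace ℝ (Fin d) → ℝ) (w : EuclideanSpace ℝ (Fin d)) :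
    Set (EuclideanSpace ℝ (Fin d)) :=
  {g | ∀ v, f w + ⟪g, v - w⟫ ≤ f v}

/-- The set of sorting permutations of the losses at `w`:
`argsort(ℓ(w)) = {π : ℓ_{π(1)}(w) ≤ ⋯ ≤ ℓ_{π(n)}(w)}`. -/
def argsortSet {d n : ℕ} (ℓ : Fin n → EuclideanSpace ℝ (Fin d) → ℝ)
    (w : EuclideanSpace ℝ (Fin d)) : Set (Equiv.Perm (Fin n)) :=
  {π | Monotone fun i => ℓ (π i) w}

/-- The spectral risk `R_σ(w) = ∑ᵢ σᵢ ℓ₍ᵢ₎(w)`, with the losses evaluated at `w` sorted in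
non-decreasing order via `Tuple.sort`. -/
noncomputable def spectralRisk {d n : ℕ} (σ : Fin n → ℝ)
    (ℓ : Fin n → EuclideanSpace ℝ (Fin d) → ℝ) (w : EuclideanSpace ℝ (Fin d)) : ℝ :=
  ∑ i, σ i * ℓ (Tuple.sort (fun j => ℓ j w) i) w

open Set Filter Topology

section RightLineDeriv

variable {E : Type*} [AddCommGroup E] [Module ℝ E] {f : E → ℝ}

/-- The one-sided directional derivative `f'(w; u)`. -/
noncomputable def rightLineDeriv (f : E → ℝ) (w u : E) : ℝ :=
  derivWithin (fun t : ℝ => f (w + t • u)) (Ioi 0) 0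

namespace ConvexOn

lemma comp_line (hf : ConvexOn ℝ univ f) (w u : E) :
    ConvexOn ℝ univ fun t : ℝ => f (w + t • u) := by
  simpa [Function.comp_def, AffineMap.lineMap_apply, add_comm] using
    hf.comp_affineMap (AffineMap.lineMap w (w + u))

lemma hasDerivWithinAt_rightLineDeriv (hf : ConvexOn ℝ univ f) (w u : E) :
    HasDerivWithinAt (fun t : ℝ => f (w + t • u)) (rightLineDeriv f w u) (Ioi 0) 0 :=
  (hf.comp_line w u).hasDerivWithinAt_rightDeriv_of_mem_interior (by simp)

lemma tendsto_rightLineDeriv (hf : ConvexOn ℝ univ f) (w u : E) :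
    Tendsto (fun t : ℝ => (f (w + t • u) - f w) / t) (𝓝[>] 0) (𝓝 (rightLineDeriv f w u)) := by
  have h := (hasDerivWithinAt_iff_tendsto_slope' (lt_irrefl 0)).mp
    (hf.hasDerivWithinAt_rightLineDeriv w u)
  refine h.congr fun t => ?_
  simp [slope_def_field, div_eq_inv_mul]

lemma rightLineDeriv_le_div (hf : ConvexOn ℝ univ f) (w u : E) {t : ℝ} (ht : 0 < t) :
    rightLineDeriv f w u ≤ (f (w + t • u) - f w) / t := by
  have h := (hf.comp_line w u).rightDeriv_le_slope_of_mem_interior (by simp) (mem_univ t) ht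
  simpa [slope_def_field, rightLineDeriv] using h

lemma rightLineDeriv_smul (hf : ConvexOn ℝ univ f) (w u : E) {c : ℝ} (hc : 0 < c) :
    rightLineDeriv f w (c • u) = c * rightLineDeriv f w u := by
  have hmul : HasDerivWithinAt (fun t : ℝ => c * t) c (Ioi 0) 0 := by
    simpa using ((hasDerivAt_id (0 : ℝ)).const_mul c).hasDerivWithinAt
  have h := (hf.hasDerivWithinAt_rightLineDeriv w u).comp_of_eq 0 hmul
    (fun t (ht : 0 < t) => mul_pos hc ht) (mul_zero c).symm
  have hfun : (fun t : ℝ => f (w + t • c • u)) = (fun t : ℝ => f (w + t • u)) ∘ (c * ·) := by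
    ext t; simp [mul_comm c, mul_smul]
  rw [rightLineDeriv, hfun, h.derivWithin (uniqueDiffWithinAt_Ioi 0), mul_comm]

lemma rightLineDeriv_add_le (hf : ConvexOn ℝ univ f) (w u v : E) :
    rightLineDeriv f w (u + v) ≤ rightLineDeriv f w u + rightLineDeriv f w v := by
  have h2 : Tendsto (fun t : ℝ => 2 * t) (𝓝[>] 0) (𝓝[>] 0) :=
    tendsto_nhdsWithin_of_tendsto_nhds_of_eventually_within _
      (((continuous_const_mul (2 : ℝ)).tendsto' 0 0 (mul_zero 2)).mono_left nhdsWithin_le_nhds)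
      (eventually_nhdsWithin_of_forall fun t ht => mem_Ioi.2 (mul_pos two_pos ht))
  refine le_of_tendsto_of_tendsto (hf.tendsto_rightLineDeriv w (u + v))
    (((hf.tendsto_rightLineDeriv w u).comp h2).add ((hf.tendsto_rightLineDeriv w v).comp h2))
    (eventually_nhdsWithin_of_forall fun t (ht : 0 < t) => ?_)
  have hmid := hf.2 (mem_univ (w + (2 * t) • u)) (mem_univ (w + (2 * t) • v))
    (by norm_num : (0 : ℝ) ≤ 1 / 2) (by norm_num : (0 : ℝ) ≤ 1 / 2) (by norm_num)
  have hpt : (1 / 2 : ℝ) • (w + (2 * t) • u) + (1 / 2 : ℝ) • (w + (2 * t) • v) =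
      w + t • (u + v) := by
    module
  rw [hpt, smul_eq_mul, smul_eq_mul] at hmid
  simp only [Function.comp_apply]
  rw [← add_div, div_le_div_iff₀ ht (by positivity)]
  nlinarith

end ConvexOn

end RightLineDeriv

lemma exists_linearMap_le_sublinear_apply_eq {E : Type*} [AddCommGroup E] [Module ℝ E]
    (N : E → ℝ) (N_hom : ∀ c : ℝ, 0 < c → ∀ x, N (c • x) = c * N x)
    (N_add : ∀ x y, N (x + y) ≤ N x + N y) (u : E) :
    ∃ φ : E →ₗ[ℝ] ℝ, φ u = N u ∧ ∀ x, φ x ≤ N x := by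
  have N_zero : N 0 = 0 := by
    have h := N_hom 2 two_pos 0
    rw [smul_zero] at h
    linarith
  have smul_le : ∀ c : ℝ, c * N u ≤ N (c • u) := by
    intro c
    rcases lt_trichotomy c 0 with hc | rfl | hc
    · have h := N_add (c • u) ((-c) • u)
      rw [← add_smul, add_neg_cancel, zero_smul, N_zero, N_hom _ (neg_pos.2 hc)] at h
      linarith
    · simp [N_zero]
    · rw [N_hom c hc]
  have hker : ∀ c : ℝ, c • u = 0 → c • N u = 0 := fun c hc => by
    rcases smul_eq_zero.1 hc with rfl | rfl
    · exact zero_smul _ _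
    · rw [N_zero, smul_zero]
  obtain ⟨φ, hφ, hφN⟩ := exists_extension_of_le_sublinear
    (LinearPMap.mkSpanSingleton' u (N u) hker) N N_hom N_add <| by
      rintro ⟨x, hx⟩
      obtain ⟨c, rfl⟩ := Submodule.mem_span_singleton.1 hx
      rw [LinearPMap.mkSpanSingleton'_apply]
      exact smul_le c
  refine ⟨φ, ?_, hφN⟩
  exact (hφ ⟨u, Submodule.mem_span_singleton_self u⟩).trans
    (LinearPMap.mkSpanSingleton'_apply_self u (N u) hker _)

lemma ConvexOn.continuous_of_univ {E : Type*} [NormedAddCommGroup E] [NormedSpace ℝ E]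
    [FiniteDimensional ℝ E] {f : E → ℝ} (hf : ConvexOn ℝ univ f) : Continuous f :=
  continuousOn_univ.1 (hf.continuousOn isOpen_univ)

section Subdiff

variable {d : ℕ} {f : EuclideanSpace ℝ (Fin d) → ℝ} {w g : EuclideanSpace ℝ (Fin d)}

lemma subdiff_eq_iInter (f : EuclideanSpace ℝ (Fin d) → ℝ) (w : EuclideanSpace ℝ (Fin d)) :
    subdiff f w = ⋂ v, {g | ⟪g, v - w⟫ ≤ f v - f w} := by
  ext g
  simp only [subdiff, mem_iInter, mem_ofPred_eq, le_sub_iff_add_le']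

lemma convex_subdiff (f : EuclideanSpace ℝ (Fin d) → ℝ) (w : EuclideanSpace ℝ (Fin d)) :
    Convex ℝ (subdiff f w) := by
  rw [subdiff_eq_iInter]
  exact convex_iInter fun v => convex_halfSpace_le
    { map_add := fun x y => inner_add_left x y _
      map_smul := fun c x => real_inner_smul_left x _ c } _

lemma isClosed_subdiff (f : EuclideanSpace ℝ (Fin d) → ℝ) (w : EuclideanSpace ℝ (Fin d)) :
    IsClosed (subdiff f w) := by
  rw [subdiff_eq_iInter]
  exact isClosed_iInter fun v => isClosed_le (by fun_prop) continuous_const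

lemma ConvexOn.inner_le_rightLineDeriv (hf : ConvexOn ℝ univ f) (hg : g ∈ subdiff f w)
    (u : EuclideanSpace ℝ (Fin d)) : ⟪g, u⟫ ≤ rightLineDeriv f w u := by
  refine ge_of_tendsto (hf.tendsto_rightLineDeriv w u) ?_
  filter_upwards [self_mem_nhdsWithin] with t (ht : 0 < t)
  have h := hg (w + t • u)
  rw [add_sub_cancel_left, real_inner_smul_right] at h
  rw [le_div_iff₀ ht]
  linarith

lemma ConvexOn.mem_subdiff_of_inner_le_rightLineDeriv (hf : ConvexOn ℝ univ f)
    (h : ∀ u, ⟪g, u⟫ ≤ rightLineDeriv f w u) : g ∈ subdiff f w := by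
  intro v
  have h1 := (h (v - w)).trans (hf.rightLineDeriv_le_div w (v - w) one_pos)
  rw [one_smul, div_one, add_sub_cancel] at h1
  linarith

lemma ConvexOn.exists_mem_subdiff_inner_eq (hf : ConvexOn ℝ univ f)
    (w u : EuclideanSpace ℝ (Fin d)) :
    ∃ g ∈ subdiff f w, ⟪g, u⟫ = rightLineDeriv f w u := by
  obtain ⟨φ, hφu, hφ⟩ := exists_linearMap_le_sublinear_apply_eq (rightLineDeriv f w)
    (fun c hc x => hf.rightLineDeriv_smul w x hc) (hf.rightLineDeriv_add_le w) u
  set g := (InnerProductSpace.toDual ℝ _).symm (LinearMap.toContinuousLinearMap φ)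
  have hg : ∀ x, ⟪g, x⟫ = φ x := fun x => InnerProductSpace.toDual_symm_apply
  exact ⟨g, hf.mem_subdiff_of_inner_le_rightLineDeriv fun x => (hg x).trans_le (hφ x),
    (hg u).trans hφu⟩

lemma ConvexOn.isCompact_subdiff (hf : ConvexOn ℝ univ f) (w : EuclideanSpace ℝ (Fin d)) :
    IsCompact (subdiff f w) := by
  obtain ⟨M, hM⟩ := (isCompact_closedBall w 1).bddAbove_image hf.continuous_of_univ.continuousOn
  have hbdd : subdiff f w ⊆ Metric.closedBall 0 (M - f w) := by
    intro g hg
    rw [mem_closedBall_zero_iff]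
    rcases eq_or_ne g 0 with rfl | hg0
    · simpa using hM (mem_image_of_mem f (Metric.mem_closedBall_self zero_le_one))
    have hgn : 0 < ‖g‖ := norm_pos_iff.2 hg0
    have hv : w + ‖g‖⁻¹ • g ∈ Metric.closedBall w 1 := by
      simp [norm_smul, hgn.ne']
    have h := hg (w + ‖g‖⁻¹ • g)
    rw [add_sub_cancel_left, real_inner_smul_right, real_inner_self_eq_norm_sq,
      pow_two, inv_mul_cancel_left₀ hgn.ne'] at h
    linarith [hM (mem_image_of_mem f hv)]
  exact (Metric.isCompact_of_isClosed_isBounded (isClosed_subdiff f w)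
    (Metric.isBounded_closedBall.subset hbdd))

end Subdiff

section ConvexHull

variable {E : Type*} [AddCommGroup E] [Module ℝ E] [TopologicalSpace E] [ContinuousAdd E]
  [ContinuousSMul ℝ E]

lemma IsCompact.convexJoin {s t : Set E} (hs : IsCompact s) (ht : IsCompact t) :
    IsCompact (_root_.convexJoin ℝ s t) := by
  have himg : _root_.convexJoin ℝ s t =
      (fun p : E × E × ℝ => (1 - p.2.2) • p.1 + p.2.2 • p.2.1) '' (s ×ˢ t ×ˢ Icc 0 1) := by
    ext x
    simp [mem_convexJoin, segment_eq_image, and_assoc]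
  rw [himg]
  exact (hs.prod (ht.prod isCompact_Icc)).image (by fun_prop)

lemma Set.Finite.isCompact_convexHull_biUnion {ι : Type*} {s : Set ι} (hs : s.Finite)
    {K : ι → Set E} (hK : ∀ i, Convex ℝ (K i)) (hKc : ∀ i, IsCompact (K i)) :
    IsCompact (convexHull ℝ (⋃ i ∈ s, K i)) := by
  induction s, hs using Set.Finite.induction_on with
  | empty => simp
  | @insert a s _ _ ih =>
    rw [biUnion_insert]
    rcases (K a).eq_empty_or_nonempty with ha | ha
    · rwa [ha, empty_union]
    rcases (⋃ i ∈ s, K i).eq_empty_or_nonempty with hs | hs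
    · rw [hs, union_empty, (hK a).convexHull_eq]
      exact hKc a
    rw [convexHull_union ha hs, (hK a).convexHull_eq]
    exact (hKc a).convexJoin ih

end ConvexHull

lemma Convex.mem_of_forall_exists_inner_le {F : Type*} [NormedAddCommGroup F]
    [InnerProductSpace ℝ F] [CompleteSpace F] {C : Set F} (hC : Convex ℝ C) (hCc : IsClosed C)
    {g : F} (h : ∀ u, ∃ c ∈ C, ⟪g, u⟫ ≤ ⟪c, u⟫) : g ∈ C := by
  by_contra hg
  obtain ⟨φ, r, hφC, hφg⟩ := geometric_hahn_banach_closed_point hC hCc hg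
  obtain ⟨c, hc, hgc⟩ := h ((InnerProductSpace.toDual ℝ F).symm φ)
  rw [real_inner_comm, InnerProductSpace.toDual_symm_apply, real_inner_comm,
    InnerProductSpace.toDual_symm_apply] at hgc
  linarith [hφC c hc]

section SpectralRisk

variable {d n : ℕ} {σ : Fin n → ℝ} {ℓ : Fin n → EuclideanSpace ℝ (Fin d) → ℝ}

lemma sum_mul_comp_perm_le_spectralRisk (hσ : Monotone σ) (π : Equiv.Perm (Fin n))
    (v : EuclideanSpace ℝ (Fin d)) : ∑ i, σ i * ℓ (π i) v ≤ spectralRisk σ ℓ v := by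
  have key := (hσ.monovary (Tuple.monotone_sort fun j => ℓ j v)).sum_smul_comp_perm_le_sum_smul
    (σ := π.trans (Tuple.sort fun j => ℓ j v).symm)
  simpa [spectralRisk] using key

lemma spectralRisk_eq_sum_of_mem_argsortSet {π : Equiv.Perm (Fin n)}
    {v : EuclideanSpace ℝ (Fin d)} (hπ : π ∈ argsortSet ℓ v) :
    spectralRisk σ ℓ v = ∑ i, σ i * ℓ (π i) v := by
  have h := (Tuple.comp_sort_eq_comp_iff_monotone (f := fun j => ℓ j v) (σ := π)).2 hπ
  exact Finset.sum_congr rfl fun i _ => congrArg (σ i * ·) (congrFun h i).symm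

lemma convexOn_spectralRisk (hconv : ∀ i, ConvexOn ℝ univ (ℓ i)) (hσ_nonneg : ∀ i, 0 ≤ σ i)
    (hσ_mono : Monotone σ) : ConvexOn ℝ univ (spectralRisk σ ℓ) := by
  refine ⟨convex_univ, fun x _ y _ a b ha hb hab => ?_⟩
  set ρ := Tuple.sort fun j => ℓ j (a • x + b • y)
  calc spectralRisk σ ℓ (a • x + b • y) = ∑ i, σ i * ℓ (ρ i) (a • x + b • y) := rfl
    _ ≤ ∑ i, σ i * (a * ℓ (ρ i) x + b * ℓ (ρ i) y) :=
        Finset.sum_le_sum fun i _ => mul_le_mul_of_nonneg_left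
          ((hconv (ρ i)).2 (mem_univ x) (mem_univ y) ha hb hab) (hσ_nonneg i)
    _ = a * ∑ i, σ i * ℓ (ρ i) x + b * ∑ i, σ i * ℓ (ρ i) y := by
        simp only [Finset.mul_sum, ← Finset.sum_add_distrib]
        exact Finset.sum_congr rfl fun i _ => by ring
    _ ≤ a * spectralRisk σ ℓ x + b * spectralRisk σ ℓ y := by
        gcongr <;> exact sum_mul_comp_perm_le_spectralRisk hσ_mono ρ _

lemma lipschitzWith_spectralRisk (hσ_nonneg : ∀ i, 0 ≤ σ i) (hσ_mono : Monotone σ)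
    (hσ_sum : ∑ i, σ i = 1) {G : ℝ≥0} (hG : ∀ i, LipschitzWith G (ℓ i)) :
    LipschitzWith G (spectralRisk σ ℓ) := by
  refine LipschitzWith.of_le_add_mul G fun x y => ?_
  set ρ := Tuple.sort fun j => ℓ j x
  calc spectralRisk σ ℓ x = ∑ i, σ i * ℓ (ρ i) x := rfl
    _ ≤ ∑ i, σ i * (ℓ (ρ i) y + G * dist x y) :=
        Finset.sum_le_sum fun i _ => mul_le_mul_of_nonneg_left
          ((hG (ρ i)).le_add_mul x y) (hσ_nonneg i)
    _ = ∑ i, σ i * ℓ (ρ i) y + G * dist x y := by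
        simp only [mul_add, Finset.sum_add_distrib, ← Finset.sum_mul, hσ_sum, one_mul]
    _ ≤ spectralRisk σ ℓ y + G * dist x y := by
        gcongr; exact sum_mul_comp_perm_le_spectralRisk hσ_mono ρ y

end SpectralRisk

section WeightedSubdiffSum

variable {d n : ℕ} {σ : Fin n → ℝ} {ℓ : Fin n → EuclideanSpace ℝ (Fin d) → ℝ}
  {w : EuclideanSpace ℝ (Fin d)} {π : Equiv.Perm (Fin n)}

variable (σ ℓ w π) in
def weightedSubdiffSum : Set (EuclideanSpace ℝ (Fin d)) :=
  {g | ∃ gs : Fin n → EuclideanSpace ℝ (Fin d),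
    (∀ i, gs i ∈ subdiff (ℓ (π i)) w) ∧ g = ∑ i, σ i • gs i}

lemma convex_weightedSubdiffSum : Convex ℝ (weightedSubdiffSum σ ℓ w π) := by
  rintro _ ⟨gs₁, hgs₁, rfl⟩ _ ⟨gs₂, hgs₂, rfl⟩ a b ha hb hab
  refine ⟨fun i => a • gs₁ i + b • gs₂ i,
    fun i => convex_subdiff _ _ (hgs₁ i) (hgs₂ i) ha hb hab, ?_⟩
  simp only [Finset.smul_sum, ← Finset.sum_add_distrib]
  exact Finset.sum_congr rfl fun i _ => by module

lemma isCompact_weightedSubdiffSum (hconv : ∀ i, ConvexOn ℝ univ (ℓ i)) :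
    IsCompact (weightedSubdiffSum σ ℓ w π) := by
  have himg : weightedSubdiffSum σ ℓ w π =
      (fun gs : Fin n → EuclideanSpace ℝ (Fin d) => ∑ i, σ i • gs i) ''
        univ.pi fun i => subdiff (ℓ (π i)) w := by
    ext g
    simp [weightedSubdiffSum, eq_comm]
  rw [himg]
  exact (isCompact_univ_pi fun i => (hconv (π i)).isCompact_subdiff w).image (by fun_prop)

lemma weightedSubdiffSum_subset_subdiff_spectralRisk (hσ_nonneg : ∀ i, 0 ≤ σ i)
    (hσ_mono : Monotone σ) (hπ : π ∈ argsortSet ℓ w) :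
    weightedSubdiffSum σ ℓ w π ⊆ subdiff (spectralRisk σ ℓ) w := by
  rintro _ ⟨gs, hgs, rfl⟩ v
  rw [sum_inner, spectralRisk_eq_sum_of_mem_argsortSet hπ, ← Finset.sum_add_distrib]
  calc ∑ i, (σ i * ℓ (π i) w + ⟪σ i • gs i, v - w⟫)
      = ∑ i, σ i * (ℓ (π i) w + ⟪gs i, v - w⟫) :=
        Finset.sum_congr rfl fun i _ => by rw [real_inner_smul_left]; ring
    _ ≤ ∑ i, σ i * ℓ (π i) v :=
        Finset.sum_le_sum fun i _ => mul_le_mul_of_nonneg_left (hgs i v) (hσ_nonneg i)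
    _ ≤ spectralRisk σ ℓ v := sum_mul_comp_perm_le_spectralRisk hσ_mono π v

lemma exists_mem_weightedSubdiffSum_inner_eq (hconv : ∀ i, ConvexOn ℝ univ (ℓ i))
    (u : EuclideanSpace ℝ (Fin d)) :
    ∃ c ∈ weightedSubdiffSum σ ℓ w π, ⟪c, u⟫ = ∑ i, σ i * rightLineDeriv (ℓ (π i)) w u := by
  choose gs hgs hgsu using fun i => (hconv (π i)).exists_mem_subdiff_inner_eq w u
  refine ⟨_, ⟨gs, hgs, rfl⟩, ?_⟩
  simp only [sum_inner, real_inner_smul_left, hgsu]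

end WeightedSubdiffSum

lemma exists_mem_argsortSet_rightLineDeriv_le {d n : ℕ} {σ : Fin n → ℝ}
    {ℓ : Fin n → EuclideanSpace ℝ (Fin d) → ℝ} (hconv : ∀ i, ConvexOn ℝ univ (ℓ i))
    (hR : ConvexOn ℝ univ (spectralRisk σ ℓ)) (w u : EuclideanSpace ℝ (Fin d)) :
    ∃ π ∈ argsortSet ℓ w,
      rightLineDeriv (spectralRisk σ ℓ) w u ≤ ∑ i, σ i * rightLineDeriv (ℓ (π i)) w u := by
  obtain ⟨π, hπ⟩ : ∃ π : Equiv.Perm (Fin n),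
      ∃ᶠ t in 𝓝[>] (0 : ℝ), π ∈ argsortSet ℓ (w + t • u) :=
    frequently_exists.1 <| Frequently.of_forall fun t =>
      ⟨Tuple.sort fun j => ℓ j (w + t • u), Tuple.monotone_sort fun j => ℓ j (w + t • u)⟩
  have hπw : π ∈ argsortSet ℓ w := by
    refine monotone_of_frequently_monotone_of_tendsto hπ fun i => ?_
    have h : Continuous fun t : ℝ => ℓ (π i) (w + t • u) :=
      (hconv (π i)).continuous_of_univ.comp (by fun_prop)
    simpa using (h.tendsto 0).mono_left nhdsWithin_le_nhds
  refine ⟨π, hπw, ge_of_tendsto_of_frequently (tendsto_finsetSum _ fun i _ =>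
    ((hconv (π i)).tendsto_rightLineDeriv w u).const_mul (σ i)) ?_⟩
  refine (hπ.and_eventually self_mem_nhdsWithin).mono fun t ⟨hπt, (ht : 0 < t)⟩ => ?_
  calc rightLineDeriv (spectralRisk σ ℓ) w u
      ≤ (spectralRisk σ ℓ (w + t • u) - spectralRisk σ ℓ w) / t := hR.rightLineDeriv_le_div w u ht
    _ = ∑ i, σ i * ((ℓ (π i) (w + t • u) - ℓ (π i) w) / t) := by
        rw [spectralRisk_eq_sum_of_mem_argsortSet hπt, spectralRisk_eq_sum_of_mem_argsortSet hπw,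
          ← Finset.sum_sub_distrib, Finset.sum_div]
        exact Finset.sum_congr rfl fun i _ => by ring

/-- For convex losses and non-decreasing non-negative weights summing to one,
the spectral risk is convex, its subdifferential is the convex hull of the Minkowski sums
`∑ᵢ σᵢ ∂ℓ_{π(i)}(w)` over sorting permutations `π`, and it is `G`-Lipschitz whenever each
loss is `G`-Lipschitz. -/
theorem stmt5 {d n : ℕ} (ℓ : Fin n → EuclideanSpace ℝ (Fin d) → ℝ)
    (hconv : ∀ i, ConvexOn ℝ Set.univ (ℓ i))
    (σ : Fin n → ℝ) (hσ_nonneg : ∀ i, 0 ≤ σ i) (hσ_mono : Monotone σ)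
    (hσ_sum : ∑ i, σ i = 1) (G : ℝ≥0) :
    ConvexOn ℝ Set.univ (spectralRisk σ ℓ) ∧
    (∀ w, subdiff (spectralRisk σ ℓ) w =
      convexHull ℝ (⋃ π ∈ argsortSet ℓ w,
        {g | ∃ gs : Fin n → EuclideanSpace ℝ (Fin d),
          (∀ i, gs i ∈ subdiff (ℓ (π i)) w) ∧ g = ∑ i, σ i • gs i})) ∧
    ((∀ i, LipschitzWith G (ℓ i)) → LipschitzWith G (spectralRisk σ ℓ)) := by
  have hR := convexOn_spectralRisk hconv hσ_nonneg hσ_mono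
  refine ⟨hR, fun w => ?_, lipschitzWith_spectralRisk hσ_nonneg hσ_mono hσ_sum⟩
  change _ = convexHull ℝ (⋃ π ∈ argsortSet ℓ w, weightedSubdiffSum σ ℓ w π)
  have hclosed : IsClosed (convexHull ℝ (⋃ π ∈ argsortSet ℓ w, weightedSubdiffSum σ ℓ w π)) :=
    ((toFinite _).isCompact_convexHull_biUnion (fun _ => convex_weightedSubdiffSum)
      (fun _ => isCompact_weightedSubdiffSum hconv)).isClosed
  refine Subset.antisymm (fun g hg => ?_) (convexHull_min (iUnion₂_subset fun π hπ =>
    weightedSubdiffSum_subset_subdiff_spectralRisk hσ_nonneg hσ_mono hπ) (convex_subdiff _ w))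
  refine (convex_convexHull ℝ _).mem_of_forall_exists_inner_le hclosed fun u => ?_
  obtain ⟨π, hπ, hRπ⟩ := exists_mem_argsortSet_rightLineDeriv_le hconv hR w u
  obtain ⟨c, hc, hcu⟩ := exists_mem_weightedSubdiffSum_inner_eq (π := π) hconv u
  exact ⟨c, subset_convexHull ℝ _ (mem_biUnion hπ hc),
    (hR.inner_le_rightLineDeriv hg u).trans (hRπ.trans hcu.ge)⟩
end

section
/- Let f : ℝ^d → ℝ be convex and G-Lipschitz continuous, let μ > 0, and set f_μ(w) := f(w) + (μ/2)‖w‖₂². Starting from w⁽⁰⁾ = 0, consider random iterates w⁽ᵗ⁺¹⁾ = w⁽ᵗ⁾ − η_t (v⁽ᵗ⁾ + μ w⁽ᵗ⁾) for t = 0, ..., T−1, where η_t = 1/(μ(t+1)) and v⁽ᵗ⁾ is a random vector whose conditional distribution given w⁽ᵗ⁾ satisfies E[v⁽ᵗ⁾ | w⁽ᵗ⁾] ∈ ∂f(w⁽ᵗ⁾) and ‖v⁽ᵗ⁾‖₂ ≤ G almost surely. Then the averaged iterate w̄⁽ᵀ⁾ := (1/T) Σ_{t=0}^{T−1} w⁽ᵗ⁾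 satisfies E[f_μ(w̄⁽ᵀ⁾)] − f_μ(w*) ≤ 2G²(1 + log T)/(μT), where w* = argmin_{w ∈ ℝ^d} f_μ(w). -/
open MeasureTheory ProbabilityTheory
open scoped RealInnerProductSpace NNReal

/-!
Write `F = f + (μ/2)‖·‖²` and `aₜ = E‖w⁽ᵗ⁾ − u‖²`. With the step size `1/(μ(t+1))` the update
reads `w⁽ᵗ⁺¹⁾ = (t/(t+1)) w⁽ᵗ⁾ − v⁽ᵗ⁾/(μ(t+1))`, so by induction `‖w⁽ᵗ⁾‖ ≤ G/μ` and the
gradient estimate `v⁽ᵗ⁾ + μ w⁽ᵗ⁾` has norm at most `2G`. Expanding `‖w⁽ᵗ⁺¹⁾ − u‖²` and using the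
subgradient inequality for `E[v⁽ᵗ⁾ | w⁽ᵗ⁾]` (tower property and pull-out) gives
`E F(w⁽ᵗ⁾) − F(u) ≤ (μ/2)(t aₜ − (t+1) aₜ₊₁) + 2G²/(μ(t+1))`. The first part telescopes, the
second sums to `(2G²/μ) H_T ≤ (2G²/μ)(1 + log T)`, and Jensen's inequality for the convex `F`
passes to the averaged iterate.
-/

section

variable {E : Type*}

noncomputable def sgdStep [AddCommGroup E] [Module ℝ E] (μ : ℝ) (t : ℕ) (x g : E) : E :=
  x - (1 / (μ * (t + 1))) • (g + μ • x)

lemma sgdStep_eq_smul_sub_smul [AddCommGroup E] [Module ℝ E] {μ : ℝ} (hμ : μ ≠ 0)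
    (t : ℕ) (x g : E) :
    sgdStep μ t x g = ((t : ℝ) / (t + 1)) • x - (1 / (μ * (t + 1))) • g := by
  unfold sgdStep
  match_scalars
  · field_simp; ring
  · field_simp

lemma norm_le_of_sgdStep [NormedAddCommGroup E] [NormedSpace ℝ E] {μ G : ℝ} (hμ : 0 < μ)
    {w g : ℕ → E} (hw0 : w 0 = 0) (hrec : ∀ t, w (t + 1) = sgdStep μ t (w t) (g t))
    (hg : ∀ t, ‖g t‖ ≤ G) (t : ℕ) : ‖w t‖ ≤ G / μ := by
  induction t with
  | zero => simpa [hw0] using div_nonneg ((norm_nonneg _).trans (hg 0)) hμ.le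
  | succ t ih =>
    calc ‖w (t + 1)‖ ≤ (t / (t + 1)) * ‖w t‖ + (1 / (μ * (t + 1))) * ‖g t‖ := by
          rw [hrec, sgdStep_eq_smul_sub_smul hμ.ne']
          refine (norm_sub_le _ _).trans_eq ?_
          rw [norm_smul, norm_smul, Real.norm_of_nonneg (by positivity),
            Real.norm_of_nonneg (by positivity)]
      _ ≤ (t / (t + 1)) * (G / μ) + (1 / (μ * (t + 1))) * G := by gcongr; exact hg t
      _ = G / μ := by field_simp

lemma inner_add_half_mul_norm_sq_eq_sgdStep [NormedAddCommGroup E] [InnerProductSpace ℝ E]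
    {μ : ℝ} (hμ : μ ≠ 0) (t : ℕ) (x g u : E) :
    ⟪g, x - u⟫ + μ / 2 * (‖x‖ ^ 2 - ‖u‖ ^ 2) =
      μ / 2 * t * ‖x - u‖ ^ 2 - μ / 2 * (t + 1) * ‖sgdStep μ t x g - u‖ ^ 2 +
        ‖g + μ • x‖ ^ 2 / (2 * μ * (t + 1)) := by
  have hstep : sgdStep μ t x g - u = (x - u) - (1 / (μ * (t + 1))) • (g + μ • x) := by
    unfold sgdStep; abel
  rw [hstep, norm_sub_sq_real (x - u), norm_smul, real_inner_smul_right, inner_add_right,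
    real_inner_smul_right, Real.norm_eq_abs, mul_pow, sq_abs, real_inner_comm (x - u),
    inner_sub_left, inner_sub_left, real_inner_self_eq_norm_sq, norm_sub_sq_real x u]
  field_simp
  rw [real_inner_comm u x]
  ring

lemma inner_add_half_mul_norm_sq_le_sgdStep [NormedAddCommGroup E] [InnerProductSpace ℝ E]
    {μ G : ℝ} (hμ : 0 < μ) (t : ℕ) {x g : E} (hx : ‖x‖ ≤ G / μ) (hg : ‖g‖ ≤ G) (u : E) :
    ⟪g, x - u⟫ + μ / 2 * (‖x‖ ^ 2 - ‖u‖ ^ 2) ≤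
      μ / 2 * t * ‖x - u‖ ^ 2 - μ / 2 * (t + 1) * ‖sgdStep μ t x g - u‖ ^ 2 +
        2 * G ^ 2 / μ / (t + 1) := by
  have hnorm : ‖g + μ • x‖ ≤ 2 * G :=
    calc ‖g + μ • x‖ ≤ ‖g‖ + μ * ‖x‖ := by
          rw [← norm_smul_of_nonneg hμ.le]; exact norm_add_le _ _
      _ ≤ G + μ * (G / μ) := by gcongr
      _ = 2 * G := by field_simp; ring
  have hsq : ‖g + μ • x‖ ^ 2 / (2 * μ * (t + 1)) ≤ 2 * G ^ 2 / μ / (t + 1) :=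
    calc ‖g + μ • x‖ ^ 2 / (2 * μ * (t + 1)) ≤ (2 * G) ^ 2 / (2 * μ * (t + 1)) := by gcongr
      _ = 2 * G ^ 2 / μ / (t + 1) := by field_simp
  rw [inner_add_half_mul_norm_sq_eq_sgdStep hμ.ne']
  exact add_le_add_right hsq _

end

lemma sum_range_le_mul_one_add_log {a b : ℕ → ℝ} {c C : ℝ} (hc : 0 ≤ c) (hC : 0 ≤ C) {T : ℕ}
    (haT : 0 ≤ a T) (hb : ∀ t, b t ≤ c * t * a t - c * (t + 1) * a (t + 1) + C / (t + 1)) :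
    ∑ t ∈ Finset.range T, b t ≤ C * (1 + Real.log T) := by
  have htele : ∑ t ∈ Finset.range T, (c * t * a t - c * (t + 1) * a (t + 1)) = - (c * T * a T) := by
    have := Finset.sum_range_sub' (fun t : ℕ => c * t * a t) T
    push_cast at this
    simpa using this
  have hharm : ∑ t ∈ Finset.range T, C / ((t : ℝ) + 1) = C * harmonic T := by
    simp [harmonic, Finset.mul_sum, div_eq_mul_inv]
  calc ∑ t ∈ Finset.range T, b t
      ≤ ∑ t ∈ Finset.range T, (c * t * a t - c * (t + 1) * a (t + 1) + C / (t + 1)) :=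
        Finset.sum_le_sum fun t _ => hb t
    _ = - (c * T * a T) + C * harmonic T := by rw [Finset.sum_add_distrib, htele, hharm]
    _ ≤ C * (1 + Real.log T) := by
        have := mul_le_mul_of_nonneg_left (harmonic_le_one_add_log T) hC
        have : 0 ≤ c * T * a T := by positivity
        linarith

lemma Continuous.integrable_comp_of_ae_norm_le {Ω E F : Type*} [MeasurableSpace Ω]
    {P : Measure Ω} [IsFiniteMeasure P] [NormedAddCommGroup E] [ProperSpace E]
    [NormedAddCommGroup F] {φ : E → F} (hφ : Continuous φ) {X : Ω → E}
    (hX : AEStronglyMeasurable X P) {R : ℝ} (hXR : ∀ᵐ ω ∂P, ‖X ω‖ ≤ R) :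
    Integrable (fun ω => φ (X ω)) P := by
  obtain ⟨C, hC⟩ := (isCompact_closedBall (0 : E) R).exists_bound_of_continuousOn hφ.continuousOn
  refine Integrable.of_bound (hφ.comp_aestronglyMeasurable hX) C ?_
  filter_upwards [hXR] with ω hω using hC _ (mem_closedBall_zero_iff.2 hω)

lemma norm_inv_card_smul_sum_le {ι E : Type*} [SeminormedAddCommGroup E] [NormedSpace ℝ E]
    {s : Finset ι} (hs : s.Nonempty) {x : ι → E} {K : ℝ} (hx : ∀ i ∈ s, ‖x i‖ ≤ K) :
    ‖(s.card : ℝ)⁻¹ • ∑ i ∈ s, x i‖ ≤ K := by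
  rw [← mem_closedBall_zero_iff, Finset.smul_sum]
  refine (convex_closedBall 0 K).sum_mem (fun _ _ => by positivity) ?_
    (fun i hi => mem_closedBall_zero_iff.2 (hx i hi))
  rw [Finset.sum_const, nsmul_eq_mul, mul_inv_cancel₀ (by simpa using hs.ne_empty)]

lemma ConvexOn.integral_comp_average_le {Ω ι E : Type*} [MeasurableSpace Ω] {P : Measure Ω}
    [IsFiniteMeasure P] [NormedAddCommGroup E] [NormedSpace ℝ E] [ProperSpace E] {φ : E → ℝ}
    (hφ : ConvexOn ℝ Set.univ φ) (hφc : Continuous φ) {s : Finset ι} (hs : s.Nonempty)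
    {X : ι → Ω → E} (hX : ∀ i, AEStronglyMeasurable (X i) P) {R : ℝ}
    (hXR : ∀ᵐ ω ∂P, ∀ i, ‖X i ω‖ ≤ R) :
    ∫ ω, φ ((s.card : ℝ)⁻¹ • ∑ i ∈ s, X i ω) ∂P ≤
      (s.card : ℝ)⁻¹ * ∑ i ∈ s, ∫ ω, φ (X i ω) ∂P := by
  have hint : ∀ i ∈ s, Integrable (fun ω => φ (X i ω)) P := fun i _ =>
    hφc.integrable_comp_of_ae_norm_le (hX i) (hXR.mono fun _ h => h i)
  have havg : Integrable (fun ω => φ ((s.card : ℝ)⁻¹ • ∑ i ∈ s, X i ω)) P :=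
    hφc.integrable_comp_of_ae_norm_le
      ((Finset.aestronglyMeasurable_fun_sum s fun i _ => hX i).const_smul _)
      (hXR.mono fun _ h => norm_inv_card_smul_sum_le hs fun i _ => h i)
  rw [← integral_finsetSum s hint, ← integral_const_mul]
  refine integral_mono havg ((integrable_finsetSum s hint).const_mul _) fun ω => ?_
  rw [Finset.smul_sum, Finset.mul_sum]
  refine hφ.map_sum_le (fun _ _ => by positivity) ?_ (fun _ _ => Set.mem_univ _)
  rw [Finset.sum_const, nsmul_eq_mul, mul_inv_cancel₀ (by simpa using hs.ne_empty)]

lemma integral_sub_le_integral_inner_of_condExp_mem_subdiff {d : ℕ} {Ω : Type*}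
    [MeasurableSpace Ω] {P : Measure Ω} [IsProbabilityMeasure P]
    {f : EuclideanSpace ℝ (Fin d) → ℝ} {X V : Ω → EuclideanSpace ℝ (Fin d)} (hX : Measurable X)
    (hV : Integrable V P) (hfX : Integrable (fun ω => f (X ω)) P)
    (hsub : ∀ᵐ ω ∂P, P[V | MeasurableSpace.comap X inferInstance] ω ∈ subdiff f (X ω))
    (u : EuclideanSpace ℝ (Fin d)) (hVX : Integrable (fun ω => ⟪V ω, X ω - u⟫) P) :
    ∫ ω, f (X ω) ∂P - f u ≤ ∫ ω, ⟪V ω, X ω - u⟫ ∂P := by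
  set m := MeasurableSpace.comap X inferInstance
  have hXu : StronglyMeasurable[m] fun ω => X ω - u :=
    ((comap_measurable X).sub_const u).stronglyMeasurable
  have hpull : P[fun ω => ⟪V ω, X ω - u⟫ | m] =ᵐ[P] fun ω => ⟪P[V | m] ω, X ω - u⟫ :=
    condExp_bilin_of_stronglyMeasurable_right (innerSL ℝ) hXu hVX hV
  calc ∫ ω, f (X ω) ∂P - f u = ∫ ω, (f (X ω) - f u) ∂P := by
        rw [integral_sub hfX (integrable_const _), integral_const, probReal_univ, one_smul]
    _ ≤ ∫ ω, P[fun ω => ⟪V ω, X ω - u⟫ | m] ω ∂P := by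
        refine integral_mono_ae (hfX.sub (integrable_const _)) integrable_condExp ?_
        filter_upwards [hsub, hpull] with ω hω hpullω
        have := hω u
        rw [← neg_sub, inner_neg_right] at this
        rw [hpullω]
        linarith
    _ = ∫ ω, ⟪V ω, X ω - u⟫ ∂P := integral_condExp hX.comap_le

lemma integral_sgdStep_le {d : ℕ} {Ω : Type*} [MeasurableSpace Ω] {P : Measure Ω}
    [IsProbabilityMeasure P] {f : EuclideanSpace ℝ (Fin d) → ℝ} (hf : Continuous f)
    {μ G : ℝ} (hμ : 0 < μ) (t : ℕ) {X V : Ω → EuclideanSpace ℝ (Fin d)} (hX : Measurable X)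
    (hV : Measurable V) (hXb : ∀ᵐ ω ∂P, ‖X ω‖ ≤ G / μ) (hVb : ∀ᵐ ω ∂P, ‖V ω‖ ≤ G)
    (hsub : ∀ᵐ ω ∂P, P[V | MeasurableSpace.comap X inferInstance] ω ∈ subdiff f (X ω))
    (u : EuclideanSpace ℝ (Fin d)) :
    ∫ ω, (f (X ω) + μ / 2 * ‖X ω‖ ^ 2) ∂P - (f u + μ / 2 * ‖u‖ ^ 2) ≤
      μ / 2 * t * ∫ ω, ‖X ω - u‖ ^ 2 ∂P
        - μ / 2 * (t + 1) * ∫ ω, ‖sgdStep μ t (X ω) (V ω) - u‖ ^ 2 ∂P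
        + 2 * G ^ 2 / μ / (t + 1) := by
  have hint : ∀ φ : EuclideanSpace ℝ (Fin d) × EuclideanSpace ℝ (Fin d) → ℝ, Continuous φ →
      Integrable (fun ω => φ (V ω, X ω)) P := fun φ hφ =>
    hφ.integrable_comp_of_ae_norm_le (hV.prodMk hX).aestronglyMeasurable (R := max G (G / μ))
      (by filter_upwards [hXb, hVb] with ω hXω hVω
          exact norm_prod_le_iff.2 ⟨hVω.trans (le_max_left _ _), hXω.trans (le_max_right _ _)⟩)
  have hfX : Integrable (fun ω => f (X ω)) P := hint (fun p => f p.2) (by fun_prop)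
  have hX2 : Integrable (fun ω => ‖X ω‖ ^ 2) P := hint (fun p => ‖p.2‖ ^ 2) (by fun_prop)
  have hXu : Integrable (fun ω => ‖X ω - u‖ ^ 2) P := hint (fun p => ‖p.2 - u‖ ^ 2) (by fun_prop)
  have hYu : Integrable (fun ω => ‖sgdStep μ t (X ω) (V ω) - u‖ ^ 2) P :=
    hint (fun p => ‖sgdStep μ t p.2 p.1 - u‖ ^ 2) (by unfold sgdStep; fun_prop)
  have hVX : Integrable (fun ω => ⟪V ω, X ω - u⟫) P := hint (fun p => ⟪p.1, p.2 - u⟫) (by fun_prop)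
  have hsubgrad := integral_sub_le_integral_inner_of_condExp_mem_subdiff hX
    (.of_bound hV.aestronglyMeasurable G hVb) hfX hsub u hVX
  have hXu' : Integrable (fun ω => μ / 2 * t * ‖X ω - u‖ ^ 2) P := hXu.const_mul _
  have hYu' : Integrable (fun ω => μ / 2 * (t + 1) * ‖sgdStep μ t (X ω) (V ω) - u‖ ^ 2) P :=
    hYu.const_mul _
  have hX2' : Integrable (fun ω => μ / 2 * ‖X ω‖ ^ 2) P := hX2.const_mul _
  have hdiff : Integrable (fun ω => μ / 2 * t * ‖X ω - u‖ ^ 2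
      - μ / 2 * (t + 1) * ‖sgdStep μ t (X ω) (V ω) - u‖ ^ 2) P := hXu'.sub hYu'
  have hmono : ∫ ω, (⟪V ω, X ω - u⟫ + μ / 2 * ‖X ω‖ ^ 2) ∂P ≤
      ∫ ω, (μ / 2 * t * ‖X ω - u‖ ^ 2 - μ / 2 * (t + 1) * ‖sgdStep μ t (X ω) (V ω) - u‖ ^ 2
        + (μ / 2 * ‖u‖ ^ 2 + 2 * G ^ 2 / μ / (t + 1))) ∂P := by
    refine integral_mono_ae (hVX.add hX2') (hdiff.add (integrable_const _)) ?_
    filter_upwards [hXb, hVb] with ω hXω hVω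
    have := inner_add_half_mul_norm_sq_le_sgdStep hμ t hXω hVω u
    linarith
  rw [integral_add hVX hX2', integral_add hdiff (integrable_const _),
    integral_sub hXu' hYu', integral_const, probReal_univ, one_smul] at hmono
  rw [integral_add hfX hX2']
  simp only [integral_const_mul] at hmono ⊢
  linarith

theorem stmt7_general {d : ℕ}
    {Ωs : Type*} [MeasureSpace Ωs] [IsProbabilityMeasure (ℙ : Measure Ωs)]
    (f : EuclideanSpace ℝ (Fin d) → ℝ) (G : ℝ≥0) (μ : ℝ) (hμ : 0 < μ)
    (hconv : ConvexOn ℝ Set.univ f) (hlip : LipschitzWith G f)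
    (T : ℕ) (hT : 1 ≤ T)
    (w v : ℕ → Ωs → EuclideanSpace ℝ (Fin d))
    (hw0 : ∀ ω, w 0 ω = 0)
    (η : ℕ → ℝ) (hη : ∀ t, η t = 1 / (μ * (t + 1)))
    (hrec : ∀ t ω, w (t + 1) ω = w t ω - η t • (v t ω + μ • w t ω))
    (hwmeas : ∀ t, Measurable (w t)) (hvmeas : ∀ t, Measurable (v t))
    (hvbound : ∀ t, ∀ᵐ ω ∂ℙ, ‖v t ω‖ ≤ (G : ℝ))
    (hvcond : ∀ t, ∀ᵐ ω ∂ℙ,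
      (MeasureTheory.condExp (MeasurableSpace.comap (w t) inferInstance) ℙ (v t)) ω ∈
        subdiff f (w t ω))
    (wstar : EuclideanSpace ℝ (Fin d)) :
    (∫ ω, (f ((T : ℝ)⁻¹ • ∑ t ∈ Finset.range T, w t ω) +
            μ / 2 * ‖(T : ℝ)⁻¹ • ∑ t ∈ Finset.range T, w t ω‖ ^ 2) ∂ℙ) -
        (f wstar + μ / 2 * ‖wstar‖ ^ 2) ≤
      2 * (G : ℝ) ^ 2 * (1 + Real.log T) / (μ * T) := by
  set F : EuclideanSpace ℝ (Fin d) → ℝ := fun u => f u + μ / 2 * ‖u‖ ^ 2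
  have hF : Continuous F := hlip.continuous.add (by fun_prop)
  have hrange : (Finset.range T).Nonempty := Finset.nonempty_range_iff.2 (by omega)
  have hstep : ∀ t ω, w (t + 1) ω = sgdStep μ t (w t ω) (v t ω) := fun t ω => by
    rw [hrec, hη]; rfl
  have hwb : ∀ t, ∀ᵐ ω ∂ℙ, ‖w t ω‖ ≤ G / μ := fun t => by
    filter_upwards [ae_all_iff.2 hvbound] with ω hω
    exact norm_le_of_sgdStep (w := (w · ω)) (g := (v · ω)) hμ (hw0 ω) (hstep · ω) hω t
  have hdescent : ∀ t, ∫ ω, F (w t ω) ∂ℙ - F wstar ≤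
      μ / 2 * t * ∫ ω, ‖w t ω - wstar‖ ^ 2 ∂ℙ
        - μ / 2 * (t + 1) * ∫ ω, ‖w (t + 1) ω - wstar‖ ^ 2 ∂ℙ + 2 * G ^ 2 / μ / (t + 1) :=
    fun t => by
      simpa only [hstep] using integral_sgdStep_le hlip.continuous hμ t (hwmeas t) (hvmeas t)
        (hwb t) (hvbound t) (hvcond t) wstar
  have hregret := sum_range_le_mul_one_add_log (T := T) (by positivity) (by positivity)
    (integral_nonneg fun ω => sq_nonneg ‖w T ω - wstar‖) hdescent
  have hFconv : ConvexOn ℝ Set.univ F :=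
    hconv.add ((convexOn_univ_norm.pow (fun _ _ => norm_nonneg _) 2).smul (by positivity))
  have hjensen := hFconv.integral_comp_average_le hF hrange
    (fun t => (hwmeas t).aestronglyMeasurable) (ae_all_iff.2 hwb)
  rw [Finset.card_range] at hjensen
  calc ∫ ω, F ((T : ℝ)⁻¹ • ∑ t ∈ Finset.range T, w t ω) ∂ℙ - F wstar
      ≤ (T : ℝ)⁻¹ * ∑ t ∈ Finset.range T, (∫ ω, F (w t ω) ∂ℙ - F wstar) := by
        rw [Finset.sum_sub_distrib, Finset.sum_const, Finset.card_range, nsmul_eq_mul,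
          mul_sub, inv_mul_cancel_left₀ (by positivity)]
        linarith
    _ ≤ (T : ℝ)⁻¹ * (2 * G ^ 2 / μ * (1 + Real.log T)) := by gcongr
    _ = 2 * G ^ 2 * (1 + Real.log T) / (μ * T) := by field_simp

/-- Stochastic subgradient method on `f_μ(w) = f(w) + (μ/2)‖w‖²` with `f`
convex and `G`-Lipschitz: iterates `w⁽ᵗ⁺¹⁾ = w⁽ᵗ⁾ − ηₜ (v⁽ᵗ⁾ + μ w⁽ᵗ⁾)`, `ηₜ = 1/(μ(t+1))`,
`w⁽⁰⁾ = 0`, with stochastic directions `v⁽ᵗ⁾` bounded by `G` whose conditional expectation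
given `w⁽ᵗ⁾` lies in `∂f(w⁽ᵗ⁾)`.  The averaged iterate satisfies
`E[f_μ(w̄⁽ᵀ⁾)] − f_μ(w*) ≤ 2G²(1 + log T)/(μT)`. -/
theorem stmt7 {d : ℕ}
    {Ωs : Type*} [MeasureSpace Ωs] [IsProbabilityMeasure (ℙ : Measure Ωs)]
    (f : EuclideanSpace ℝ (Fin d) → ℝ) (G : ℝ≥0) (μ : ℝ) (hμ : 0 < μ)
    (hconv : ConvexOn ℝ Set.univ f) (hlip : LipschitzWith G f)
    (T : ℕ) (hT : 1 ≤ T)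
    (w v : ℕ → Ωs → EuclideanSpace ℝ (Fin d))
    (hw0 : ∀ ω, w 0 ω = 0)
    (η : ℕ → ℝ) (hη : ∀ t, η t = 1 / (μ * (t + 1)))
    (hrec : ∀ t ω, w (t + 1) ω = w t ω - η t • (v t ω + μ • w t ω))
    (hwmeas : ∀ t, Measurable (w t)) (hvmeas : ∀ t, Measurable (v t))
    (hvbound : ∀ t, ∀ᵐ ω ∂ℙ, ‖v t ω‖ ≤ (G : ℝ))
    (hvcond : ∀ t, ∀ᵐ ω ∂ℙ,
      (MeasureTheory.condExp (MeasurableSpace.comap (w t) inferInstance) ℙ (v t)) ω ∈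
        subdiff f (w t ω))
    (wstar : EuclideanSpace ℝ (Fin d))
    (hstar : ∀ u, f wstar + μ / 2 * ‖wstar‖ ^ 2 ≤ f u + μ / 2 * ‖u‖ ^ 2) :
    (∫ ω, (f ((T : ℝ)⁻¹ • ∑ t ∈ Finset.range T, w t ω) +
            μ / 2 * ‖(T : ℝ)⁻¹ • ∑ t ∈ Finset.range T, w t ω‖ ^ 2) ∂ℙ) -
        (f wstar + μ / 2 * ‖wstar‖ ^ 2) ≤
      2 * (G : ℝ) ^ 2 * (1 + Real.log T) / (μ * T) :=
  stmt7_general f G μ hμ hconv hlip T hT w v hw0 η hη hrec hwmeas hvmeas hvbound hvcond wstar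
end

section
/- Let x_1, ..., x_n ∈ ℝ, let m divide n with 1 ≤ m ≤ n, and let X_1, ..., X_m be a uniformly random sample drawn without replacement from {x_1, ..., x_n}. Let μ_n := (1/n) Σ_{i=1}^n δ_{x_i} and μ_{n,m} := (1/m) Σ_{j=1}^m δ_{X_j} be the (normalized) empirical measures. Then for any q ≥ 1, almost surely there exists a coupling γ of μ_{n,m} and μ_n (a probability measure on ℝ² with marginals μ_{n,m} and μ_n) such that ∫ |x − y|^q dγ(x, y) ≤ ((n − m)/n) (x_{(n)} − x_{(1)})^q, where x_{(n)} = max_i x_i and x_{(1)} = min_i x_i. In particular, the q-Wasserstein distance satisfies W_q^q(μ_{n,m}, μ_n) ≤ ((n − m)/n)(x_{(n)} − x_{(1)})^q. -/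
/-!
Each sampled atom carries mass `1 / m`. Keep `1 / n` of it in place and spread the remaining
`(n - m) / (n m)` uniformly over the `n - m` atoms that were not sampled, which thereby receive
`1 / n` each. Only the moved mass `(n - m) / n` costs anything, and each unit of it costs at most
`(x₍ₙ₎ - x₍₁₎) ^ q`.
-/

open MeasureTheory Finset
open scoped ENNReal

namespace MeasureTheory.Measure

variable {α : Type*} [MeasurableSpace α]

lemma lintegral_prod_le_of_ae_mem {β : Type*} [MeasurableSpace β] {μ : Measure α}
    {ν : Measure β} {s : Set α} {t : Set β} (hμ : ∀ᵐ x ∂μ, x ∈ s) (hν : ∀ᵐ y ∂ν, y ∈ t)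
    {c : α × β → ℝ≥0∞} {C : ℝ≥0∞} (hc : ∀ x ∈ s, ∀ y ∈ t, c (x, y) ≤ C) :
    ∫⁻ p, c p ∂μ.prod ν ≤ C * (μ Set.univ * ν Set.univ) := by
  have hbound : ∀ᵐ p ∂μ.prod ν, c p ≤ C := by
    filter_upwards [quasiMeasurePreserving_fst.ae hμ, quasiMeasurePreserving_snd.ae hν]
      with p hp₁ hp₂ using hc p.1 hp₁ p.2 hp₂
  calc ∫⁻ p, c p ∂μ.prod ν ≤ ∫⁻ _, C ∂μ.prod ν := lintegral_mono_ae hbound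
    _ = C * (μ.prod ν) (Set.univ ×ˢ Set.univ) := by rw [lintegral_const, Set.univ_prod_univ]
    _ ≤ C * (μ Set.univ * ν Set.univ) := by gcongr; exact prod_prod_le _ _

noncomputable def partialDiagonalCoupling (a : ℝ≥0∞) (μ ν : Measure α) : Measure (α × α) :=
  a • μ.map (fun x => (x, x)) + μ.prod ν

variable {a : ℝ≥0∞} {μ ν : Measure α}

lemma lintegral_partialDiagonalCoupling {c : α × α → ℝ≥0∞} (hc : Measurable c) :
    ∫⁻ p, c p ∂partialDiagonalCoupling a μ ν =
      a * ∫⁻ x, c (x, x) ∂μ + ∫⁻ p, c p ∂μ.prod ν := by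
  rw [partialDiagonalCoupling, lintegral_add_measure, lintegral_smul_measure,
    lintegral_map hc (by fun_prop)]
  rfl

variable [SFinite ν]

lemma map_fst_partialDiagonalCoupling :
    (partialDiagonalCoupling a μ ν).map Prod.fst = (a + ν Set.univ) • μ := by
  rw [partialDiagonalCoupling, Measure.map_add _ _ measurable_fst, Measure.map_smul,
    map_map measurable_fst (by fun_prop), map_fst_prod, add_smul]
  simp only [Function.comp_def, map_id']

lemma map_snd_partialDiagonalCoupling :
    (partialDiagonalCoupling a μ ν).map Prod.snd = a • μ + μ Set.univ • ν := by
  rw [partialDiagonalCoupling, Measure.map_add _ _ measurable_snd, Measure.map_smul,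
    map_map measurable_snd (by fun_prop), map_snd_prod]
  simp only [Function.comp_def, map_id']

end MeasureTheory.Measure

section Empirical

variable {ι α : Type*} [MeasurableSpace α]

noncomputable def empiricalMeasure (s : Finset ι) (x : ι → α) : Measure α :=
  (#s : ℝ≥0∞)⁻¹ • ∑ i ∈ s, Measure.dirac (x i)

lemma measure_univ_smul_sum_dirac (c : ℝ≥0∞) (s : Finset ι) (x : ι → α) :
    (c • ∑ i ∈ s, Measure.dirac (x i)) Set.univ = c * #s := by
  simp

lemma isProbabilityMeasure_empiricalMeasure {s : Finset ι} (hs : s.Nonempty) (x : ι → α) :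
    IsProbabilityMeasure (empiricalMeasure s x) := by
  refine ⟨?_⟩
  rw [empiricalMeasure, measure_univ_smul_sum_dirac]
  exact ENNReal.inv_mul_cancel (by simpa using hs.ne_empty) (ENNReal.natCast_ne_top _)

lemma ae_mem_range_smul_sum_dirac [MeasurableSingletonClass α] (c : ℝ≥0∞)
    (s : Finset ι) (x : ι → α) : ∀ᵐ y ∂(c • ∑ i ∈ s, Measure.dirac (x i)), y ∈ Set.range x := by
  rw [ae_iff]
  simp [Measure.dirac_apply]

lemma smul_empiricalMeasure_add_smul_sum_compl [Fintype ι] [DecidableEq ι] {s : Finset ι}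
    (hs : s.Nonempty) (x : ι → α) :
    (#s / Fintype.card ι : ℝ≥0∞) • empiricalMeasure s x +
        (Fintype.card ι : ℝ≥0∞)⁻¹ • ∑ i ∈ sᶜ, Measure.dirac (x i) =
      empiricalMeasure univ x := by
  have hs0 : (#s : ℝ≥0∞) ≠ 0 := by simpa using hs.ne_empty
  rw [empiricalMeasure, smul_smul, ENNReal.div_eq_inv_mul, mul_assoc,
    ENNReal.mul_inv_cancel hs0 (ENNReal.natCast_ne_top _), mul_one, ← smul_add,
    sum_add_sum_compl, empiricalMeasure, card_univ]

theorem exists_coupling_empiricalMeasure_lintegral_le [Fintype ι] [DecidableEq ι]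
    [MeasurableSingletonClass α] (x : ι → α) {s : Finset ι} (hs : s.Nonempty)
    {c : α × α → ℝ≥0∞} (hc : Measurable c)
    (hdiag : ∀ a, c (a, a) = 0) {C : ℝ≥0∞} (hC : ∀ i j, c (x i, x j) ≤ C) :
    ∃ γ : Measure (α × α), IsProbabilityMeasure γ ∧
      γ.map Prod.fst = empiricalMeasure s x ∧ γ.map Prod.snd = empiricalMeasure univ x ∧
      ∫⁻ p, c p ∂γ ≤ #sᶜ / Fintype.card ι * C := by
  set n : ℝ≥0∞ := (Fintype.card ι : ℝ≥0∞)
  have hn0 : n ≠ 0 := Nat.cast_ne_zero.2 (Fintype.card_pos_iff.2 ⟨hs.choose⟩).ne'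
  set μ := empiricalMeasure s x
  set ν := n⁻¹ • ∑ i ∈ sᶜ, Measure.dirac (x i)
  have := isProbabilityMeasure_empiricalMeasure hs x
  have hν : ν Set.univ = #sᶜ / n := by
    rw [measure_univ_smul_sum_dirac, ENNReal.div_eq_inv_mul]
  have hmass : #s / n + ν Set.univ = 1 := by
    rw [hν, ENNReal.div_add_div_same, ← Nat.cast_add, card_add_card_compl,
      ENNReal.div_self hn0 (ENNReal.natCast_ne_top _)]
  set γ := Measure.partialDiagonalCoupling (#s / n) μ ν
  have hfst : γ.map Prod.fst = μ := by
    rw [Measure.map_fst_partialDiagonalCoupling, hmass, one_smul]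
  have : IsProbabilityMeasure (γ.map Prod.fst) := hfst ▸ inferInstance
  refine ⟨γ, Measure.isProbabilityMeasure_of_map Prod.fst, hfst, ?_, ?_⟩
  · rw [Measure.map_snd_partialDiagonalCoupling, measure_univ, one_smul,
      smul_empiricalMeasure_add_smul_sum_compl hs]
  · have hprod : ∫⁻ p, c p ∂μ.prod ν ≤ C * (μ Set.univ * ν Set.univ) :=
      Measure.lintegral_prod_le_of_ae_mem (ae_mem_range_smul_sum_dirac _ s x)
        (ae_mem_range_smul_sum_dirac _ sᶜ x) (by rintro _ ⟨i, rfl⟩ _ ⟨j, rfl⟩; exact hC i j)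
    rw [Measure.lintegral_partialDiagonalCoupling hc]
    simpa [hdiag, hν, mul_comm] using hprod

end Empirical

lemma abs_sub_rpow_le_of_mem_Icc {a b lo hi q : ℝ} (hq : 0 ≤ q) (ha : a ∈ Set.Icc lo hi)
    (hb : b ∈ Set.Icc lo hi) : |a - b| ^ q ≤ (hi - lo) ^ q :=
  Real.rpow_le_rpow (abs_nonneg _) (Real.dist_eq a b ▸ Real.dist_le_of_mem_Icc ha hb) hq

theorem stmt8_general {n m : ℕ} (hm : 0 < m)
    (x : Fin n → ℝ) (q : ℝ) (hq : 1 ≤ q)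
    (xmin xmax : ℝ) (hmax : IsGreatest (Set.range x) xmax) (hmin : IsLeast (Set.range x) xmin)
    (ι : Fin m ↪ Fin n) :
    (∃ γ : Measure (ℝ × ℝ), IsProbabilityMeasure γ ∧
      γ.map Prod.fst = (m : ℝ≥0∞)⁻¹ • ∑ j : Fin m, Measure.dirac (x (ι j)) ∧
      γ.map Prod.snd = (n : ℝ≥0∞)⁻¹ • ∑ i : Fin n, Measure.dirac (x i) ∧
      ∫⁻ p, ENNReal.ofReal (|p.1 - p.2| ^ q) ∂γ ≤
        ENNReal.ofReal (((n : ℝ) - m) / n * (xmax - xmin) ^ q)) ∧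
    ⨅ (γ : Measure (ℝ × ℝ)) (_ : γ.map Prod.fst = (m : ℝ≥0∞)⁻¹ • ∑ j : Fin m, Measure.dirac (x (ι j)) ∧
        γ.map Prod.snd = (n : ℝ≥0∞)⁻¹ • ∑ i : Fin n, Measure.dirac (x i)),
      ∫⁻ p, ENNReal.ofReal (|p.1 - p.2| ^ q) ∂γ ≤
        ENNReal.ofReal (((n : ℝ) - m) / n * (xmax - xmin) ^ q) := by
  set s := univ.map ι
  have hs : s.Nonempty := (univ_nonempty_iff.2 ⟨⟨0, hm⟩⟩).map
  have hsample : empiricalMeasure s x = (m : ℝ≥0∞)⁻¹ • ∑ j : Fin m, Measure.dirac (x (ι j)) := by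
    simp [empiricalMeasure, s, sum_map]
  have hpop : empiricalMeasure univ x = (n : ℝ≥0∞)⁻¹ • ∑ i : Fin n, Measure.dirac (x i) := by
    simp [empiricalMeasure]
  have hspread (i j : Fin n) :
      ENNReal.ofReal (|x i - x j| ^ q) ≤ ENNReal.ofReal ((xmax - xmin) ^ q) := by
    have hmem (k : Fin n) : x k ∈ Set.Icc xmin xmax :=
      ⟨hmin.2 (Set.mem_range_self k), hmax.2 (Set.mem_range_self k)⟩
    exact ENNReal.ofReal_le_ofReal (abs_sub_rpow_le_of_mem_Icc (by linarith) (hmem i) (hmem j))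
  have hcompl : (#sᶜ : ℝ) = n - m := by
    have := card_compl_add_card s
    simp only [s, card_map, card_univ, Fintype.card_fin] at this
    rw [eq_sub_iff_add_eq]
    exact_mod_cast this
  have hfraction : (#sᶜ / Fintype.card (Fin n) : ℝ≥0∞) * ENNReal.ofReal ((xmax - xmin) ^ q) =
      ENNReal.ofReal (((n : ℝ) - m) / n * (xmax - xmin) ^ q) := by
    have hn : (0 : ℝ) < n := by exact_mod_cast (ι ⟨0, hm⟩).pos
    rw [← hcompl, ENNReal.ofReal_mul (by positivity), ENNReal.ofReal_div_of_pos hn]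
    simp
  obtain ⟨γ, hγ, hfst, hsnd, hcost⟩ := exists_coupling_empiricalMeasure_lintegral_le x hs
    (c := fun p => ENNReal.ofReal (|p.1 - p.2| ^ q)) (by fun_prop)
    (by simp [Real.zero_rpow (by linarith : q ≠ 0)]) hspread
  rw [hsample] at hfst
  rw [hpop] at hsnd
  rw [hfraction] at hcost
  exact ⟨⟨γ, hγ, hfst, hsnd, hcost⟩, iInf₂_le_of_le γ ⟨hfst, hsnd⟩ hcost⟩

/-- For `x₁, ..., xₙ ∈ ℝ`, `m ∣ n`, `1 ≤ m ≤ n`, and any realization of a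
sample of size `m` drawn without replacement (i.e. any injection `ι : Fin m ↪ Fin n`), there is
a coupling `γ` of the empirical measures `μ_{n,m}` and `μₙ` with
`∫ |x − y|^q dγ ≤ ((n − m)/n) (x₍ₙ₎ − x₍₁₎)^q`; in particular
`W_q^q(μ_{n,m}, μₙ) ≤ ((n − m)/n)(x₍ₙ₎ − x₍₁₎)^q`. -/
theorem stmt8 {n m : ℕ} (hm : 0 < m) (hdvd : m ∣ n) (hle : m ≤ n)
    (x : Fin n → ℝ) (q : ℝ) (hq : 1 ≤ q)
    (xmin xmax : ℝ) (hmax : IsGreatest (Set.range x) xmax) (hmin : IsLeast (Set.range x) xmin)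
    (ι : Fin m ↪ Fin n) :
    (∃ γ : Measure (ℝ × ℝ), IsProbabilityMeasure γ ∧
      γ.map Prod.fst = (m : ℝ≥0∞)⁻¹ • ∑ j : Fin m, Measure.dirac (x (ι j)) ∧
      γ.map Prod.snd = (n : ℝ≥0∞)⁻¹ • ∑ i : Fin n, Measure.dirac (x i) ∧
      ∫⁻ p, ENNReal.ofReal (|p.1 - p.2| ^ q) ∂γ ≤
        ENNReal.ofReal (((n : ℝ) - m) / n * (xmax - xmin) ^ q)) ∧
    ⨅ (γ : Measure (ℝ × ℝ)) (_ : γ.map Prod.fst = (m : ℝ≥0∞)⁻¹ • ∑ j : Fin m, Measure.dirac (x (ι j)) ∧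
        γ.map Prod.snd = (n : ℝ≥0∞)⁻¹ • ∑ i : Fin n, Measure.dirac (x i)),
      ∫⁻ p, ENNReal.ofReal (|p.1 - p.2| ^ q) ∂γ ≤
        ENNReal.ofReal (((n : ℝ) - m) / n * (xmax - xmin) ^ q) :=
  stmt8_general hm x q hq xmin xmax hmax hmin ι
end

section
/- Let x_1, ..., x_n ∈ ℝ, let 1 ≤ m ≤ n with m dividing n, and let X_1, ..., X_m be drawn uniformly without replacement from {x_1, ..., x_n}. Let F_n be the empirical CDF of x_1, ..., x_n and F_{n,m} the empirical CDF of X_1, ..., X_m. Let s : (0,1) → [0,∞) be a bounded probability density, let u(t) := 1 for t ∈ (0,1) be the uniform density, and let 𝕃_s denote the L-functional with spectrum s. Then |E[𝕃_s[F_{n,m}]] − 𝕃_s[F_n]| ≤ ((n − m)/n) ‖s − u‖_∞ (x_{(n)} − x_{(1)}), where ‖s − u‖_∞ := sup_{t ∈ (0,1)} |s(t) − u(t)|, x_{(n)} = max_i x_i, x_{(1)} = min_i x_i, and the expectation is over the random sample. -/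
open MeasureTheory

noncomputable instance {m n : ℕ} : Fintype (Fin m ↪ Fin n) := Function.Embedding.fintype

/-- Quantile function (generalized inverse CDF): `G⁻¹(t) = inf {z | G z ≥ t}`. -/
noncomputable def quantile (G : ℝ → ℝ) (t : ℝ) : ℝ := sInf {z : ℝ | t ≤ G z}

/-- Empirical CDF of the sample `Z 0, ..., Z (n-1)`. -/
noncomputable def empCDF {n : ℕ} (Z : Fin n → ℝ) (z : ℝ) : ℝ :=
  (∑ i, if Z i ≤ z then (1 : ℝ) else 0) / n

/-- L-functional with spectrum `s` applied to a CDF `G` : `𝕃ₛ[G] = ∫₀¹ s(t) G⁻¹(t) dt`. -/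
noncomputable def Lfun (s G : ℝ → ℝ) : ℝ :=
  ∫ t in Set.Ioo (0 : ℝ) 1, s t * quantile G t

/-! For an empirical CDF of `N` points, `𝕃ₛ` is `∑ⱼ σ̂ⱼ x₍ⱼ₎`, and writing
`σ̂ⱼ = ∫ (s - 1) + 1/N` over the `j`-th cell splits off the sample mean, whose expectation
under sampling without replacement is the population mean. For a fixed sample, refine each of
its `m` cells into `k = n/m` population cells: the remaining difference becomes
`∑ᵢ eᵢ (yᵢ - x₍ᵢ₎)` with `|eᵢ| ≤ ‖s - u‖_∞ / n`, where `y` is the sorted sample with every point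
repeated `k` times. For sorted tuples `∑ᵢ |yᵢ - x₍ᵢ₎| = ∫ |#{y ≤ z} - #{x ≤ z}| dz`, and the two
counts differ by at most `n - m` since the sample is `m` of the `n` population points. -/

open Finset

/-- Cells are counted from `0`: for `f = s` this is the paper's weight `σ̂_{j+1}`. -/
noncomputable def cellIntegral (f : ℝ → ℝ) (N j : ℕ) : ℝ :=
  ∫ t in (j : ℝ) / N..((j : ℝ) + 1) / N, f t

section Cells

variable {f : ℝ → ℝ} {N j : ℕ}

lemma uIcc_cell_subset (hj : j < N) :
    Set.uIcc ((j : ℝ) / N) (((j : ℝ) + 1) / N) ⊆ Set.uIcc 0 1 := by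
  have hN : (0 : ℝ) < N := by exact_mod_cast j.zero_le.trans_lt hj
  have hj' : (j : ℝ) + 1 ≤ N := by exact_mod_cast hj
  rw [Set.uIcc_of_le (by gcongr; linarith), Set.uIcc_of_le zero_le_one]
  exact Set.Icc_subset_Icc (by positivity) ((div_le_one hN).2 hj')

lemma IntervalIntegrable.cell (hf : IntervalIntegrable f volume 0 1) (hj : j < N) :
    IntervalIntegrable f volume ((j : ℝ) / N) (((j : ℝ) + 1) / N) :=
  hf.mono_set (uIcc_cell_subset hj)

lemma sum_cellIntegral_refine {m k : ℕ} (hk : k ≠ 0)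
    (hf : ∀ r < k, IntervalIntegrable f volume (((k * j + r : ℕ) : ℝ) / (m * k : ℕ))
      ((((k * j + r : ℕ) : ℝ) + 1) / (m * k : ℕ))) :
    ∑ r ∈ range k, cellIntegral f (m * k) (k * j + r) = cellIntegral f m j := by
  have hkR : (k : ℝ) ≠ 0 := by exact_mod_cast hk
  have hadj := intervalIntegral.sum_integral_adjacent_intervals
    (a := fun r : ℕ => ((k * j + r : ℕ) : ℝ) / (m * k : ℕ)) (μ := volume) (f := f)
    (n := k) (fun r hr => by simpa [add_assoc] using hf r hr)
  rw [cellIntegral]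
  convert hadj using 2
  · simp [cellIntegral, add_assoc]
  · push_cast; rw [add_zero, mul_comm (k : ℝ), mul_div_mul_right _ _ hkR]
  · push_cast; rw [← mul_add_one, mul_comm (k : ℝ), mul_div_mul_right _ _ hkR]

lemma cellIntegral_sub_one (hf : IntervalIntegrable f volume ((j : ℝ) / N) (((j : ℝ) + 1) / N)) :
    cellIntegral (fun t => f t - 1) N j = cellIntegral f N j - 1 / N := by
  rw [cellIntegral, intervalIntegral.integral_sub hf intervalIntegrable_const,
    intervalIntegral.integral_const, smul_eq_mul, mul_one, cellIntegral]
  ring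

lemma abs_cellIntegral_le {M : ℝ} (hf : ∀ t ∈ Set.Ioo (0 : ℝ) 1, |f t| ≤ M) (hj : j < N) :
    |cellIntegral f N j| ≤ M / N := by
  have hN : (0 : ℝ) < N := by exact_mod_cast j.zero_le.trans_lt hj
  have hcell : (j : ℝ) / N ≤ ((j : ℝ) + 1) / N := by gcongr; linarith
  have hbound := intervalIntegral.norm_integral_le_of_norm_le_const_ae (C := M) (f := f)
    (a := (j : ℝ) / N) (b := ((j : ℝ) + 1) / N) <| by
      -- the bound is only known on `(0, 1)`, and the last cell contains `1`
      filter_upwards [(Set.countable_singleton (1 : ℝ)).ae_notMem volume] with t ht₁ ht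
      have ht' := uIcc_cell_subset hj (Set.uIoc_subset_uIcc ht)
      rw [Set.uIoc_of_le hcell] at ht
      rw [Set.uIcc_of_le zero_le_one] at ht'
      exact hf t ⟨(div_nonneg (Nat.cast_nonneg j) hN.le).trans_lt ht.1,
        lt_of_le_of_ne ht'.2 ht₁⟩
  rwa [show ((j : ℝ) + 1) / N - j / N = 1 / N by ring, abs_of_pos (by positivity),
    mul_one_div] at hbound

end Cells

lemma Monotone.lt_card_filter_le_iff {α : Type*} [LinearOrder α] {N : ℕ} {w : Fin N → α}
    (hw : Monotone w) (j : Fin N) (z : α) : (j : ℕ) < #{i | w i ≤ z} ↔ w j ≤ z := by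
  constructor
  · intro h
    by_contra! hz
    have hsub : ({i | w i ≤ z} : Finset (Fin N)) ⊆ Iio j := fun i hi => by
      simp only [mem_filter, mem_univ, true_and] at hi
      exact mem_Iio.2 (lt_of_not_ge fun hji => (hz.trans_le (hw hji)).not_ge hi)
    simpa using (card_le_card hsub).trans_lt' h
  · intro h
    have hsub : Iic j ⊆ ({i | w i ≤ z} : Finset (Fin N)) := fun i hi => by
      simpa using (hw (mem_Iic.1 hi)).trans h
    simpa using (card_le_card hsub)

lemma card_filter_sort_le {α : Type*} [LinearOrder α] {N : ℕ} (Z : Fin N → α) (z : α) :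
    #{i | Z (Tuple.sort Z i) ≤ z} = #{i | Z i ≤ z} :=
  card_equiv (Tuple.sort Z) (by simp)

lemma quantile_empCDF {N : ℕ} (Z : Fin N → ℝ) (j : Fin N) {t : ℝ}
    (ht : t ∈ Set.Ioc ((j : ℝ) / N) (((j : ℝ) + 1) / N)) :
    quantile (empCDF Z) t = Z (Tuple.sort Z j) := by
  have hN : (0 : ℝ) < N := by exact_mod_cast j.pos
  obtain ⟨ht₀, ht₁⟩ := ht
  rw [div_lt_iff₀ hN] at ht₀
  rw [le_div_iff₀ hN] at ht₁
  have hset : {z : ℝ | t ≤ empCDF Z z} = Set.Ici (Z (Tuple.sort Z j)) := by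
    have hmono : Monotone fun i => Z (Tuple.sort Z i) := Tuple.monotone_sort Z
    ext z
    change t ≤ empCDF Z z ↔ _
    rw [Set.mem_Ici, empCDF, le_div_iff₀ hN, ← natCast_card_filter, ← card_filter_sort_le,
      ← hmono.lt_card_filter_le_iff, ← Nat.add_one_le_iff]
    constructor
    · intro h
      exact_mod_cast ht₀.trans_le h
    · intro h
      exact ht₁.trans (by exact_mod_cast h)
  rw [quantile, hset, csInf_Ici]

theorem Lfun_empCDF {N : ℕ} [NeZero N] {s : ℝ → ℝ} (hs : IntervalIntegrable s volume 0 1)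
    (Z : Fin N → ℝ) :
    Lfun s (empCDF Z) = ∑ j : Fin N, cellIntegral s N j * Z (Tuple.sort Z j) := by
  set g := fun t => s t * quantile (empCDF Z) t
  have hcell (j : Fin N) : Set.EqOn (fun t => s t * Z (Tuple.sort Z j)) g
      (Set.uIoc ((j : ℝ) / N) (((j : ℝ) + 1) / N)) := fun t ht => by
    rw [Set.uIoc_of_le (by gcongr; linarith)] at ht
    simp only [g, quantile_empCDF Z j ht]
  have hg (j : Fin N) : IntervalIntegrable g volume ((j : ℝ) / N) (((j : ℝ) + 1) / N) :=
    ((hs.cell j.isLt).mul_const _).congr (hcell j)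
  -- `(0, 1]` is the only cell for `N = 1`
  have hsplit := sum_cellIntegral_refine (f := g) (m := 1) (j := 0) (NeZero.ne N)
    fun r hr => by simpa using hg ⟨r, hr⟩
  simp only [mul_zero, zero_add, one_mul] at hsplit
  rw [Lfun, ← integral_Ioc_eq_integral_Ioo, ← intervalIntegral.integral_of_le zero_le_one,
    show (∫ t in (0 : ℝ)..1, g t) = cellIntegral g 1 0 by simp [cellIntegral], ← hsplit,
    ← Fin.sum_univ_eq_sum_range]
  refine sum_congr rfl fun j _ => ?_
  rw [cellIntegral, cellIntegral,
    ← intervalIntegral.integral_congr_ae (.of_forall fun t ht => hcell j ht),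
    intervalIntegral.integral_mul_const]

theorem Lfun_empCDF_eq_add_mean {N : ℕ} [NeZero N] {s : ℝ → ℝ}
    (hs : IntervalIntegrable s volume 0 1) (Z : Fin N → ℝ) :
    Lfun s (empCDF Z) =
      ∑ j : Fin N, cellIntegral (fun t => s t - 1) N j * Z (Tuple.sort Z j) + (∑ j, Z j) / N := by
  rw [Lfun_empCDF hs, sum_div, ← Equiv.sum_comp (Tuple.sort Z) (fun j => Z j / N),
    ← sum_add_distrib]
  refine sum_congr rfl fun j _ => ?_
  rw [cellIntegral_sub_one (hs.cell j.isLt)]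
  ring

lemma sum_cellIntegral_mul_eq_sum_divNat {m k : ℕ} [NeZero k] {f : ℝ → ℝ}
    (hf : IntervalIntegrable f volume 0 1) (w : Fin m → ℝ) :
    ∑ j : Fin m, cellIntegral f m j * w j =
      ∑ i : Fin (m * k), cellIntegral f (m * k) i * w i.divNat := by
  rw [← finProdFinEquiv.sum_comp, Fintype.sum_prod_type]
  refine sum_congr rfl fun j _ => ?_
  have hlt (r : ℕ) (hr : r < k) : k * j + r < m * k := by
    nlinarith [j.isLt]
  rw [← sum_cellIntegral_refine (NeZero.ne k) fun r hr => hf.cell (hlt r hr), sum_mul,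
    ← Fin.sum_univ_eq_sum_range]
  refine sum_congr rfl fun r _ => ?_
  have hdiv : (finProdFinEquiv (j, r)).divNat = j := by
    simpa only [finProdFinEquiv_symm_apply] using
      congrArg Prod.fst (finProdFinEquiv.symm_apply_apply (j, r))
  rw [hdiv, finProdFinEquiv_apply_val, add_comm]

lemma abs_ite_le_sub_ite_le (a b z : ℝ) :
    |(if a ≤ z then (1 : ℝ) else 0) - if b ≤ z then 1 else 0| =
      (Set.Ico (min a b) (max a b)).indicator 1 z := by
  by_cases ha : a ≤ z <;> by_cases hb : b ≤ z <;>
    simp [Set.indicator_apply, *]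

lemma abs_sub_eq_integral_abs_ite_le_sub {a b lo hi : ℝ} (ha : a ∈ Set.Icc lo hi)
    (hb : b ∈ Set.Icc lo hi) :
    |a - b| = ∫ z in Set.Ico lo hi, |(if a ≤ z then (1 : ℝ) else 0) - if b ≤ z then 1 else 0| := by
  simp_rw [abs_ite_le_sub_ite_le]
  rw [setIntegral_indicator measurableSet_Ico, Set.inter_eq_self_of_subset_right
      (Set.Ico_subset_Ico (le_min ha.1 hb.1) (max_le ha.2 hb.2)), Pi.one_def, setIntegral_const,
    Real.volume_real_Ico_of_le min_le_max, smul_eq_mul, mul_one,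
    max_sub_min_eq_abs']

lemma sum_abs_ite_sub_ite_of_imp {ι : Type*} [Fintype ι] {p q : ι → Prop} [DecidablePred p]
    [DecidablePred q] (h : ∀ i, p i → q i) :
    ∑ i, |(if p i then (1 : ℝ) else 0) - if q i then 1 else 0| =
      |(#{i | p i} : ℝ) - #{i | q i}| := by
  have hterm (i : ι) :
      |(if p i then (1 : ℝ) else 0) - if q i then 1 else 0| =
        (if q i then 1 else 0) - if p i then 1 else 0 := by
    by_cases hp : p i
    · simp [hp, h i hp]
    · by_cases hq : q i <;> simp [hp, hq]
  have hcard : #{i | p i} ≤ #{i | q i} := card_le_card (monotone_filter_right _ fun i _ => h i)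
  rw [sum_congr rfl fun i _ => hterm i, sum_sub_distrib, ← natCast_card_filter,
    ← natCast_card_filter, abs_sub_comm, abs_of_nonneg (sub_nonneg.2 (by exact_mod_cast hcard))]

lemma Monotone.sum_abs_ite_le_sub_ite_le {N : ℕ} {Y X : Fin N → ℝ} (hY : Monotone Y)
    (hX : Monotone X) (z : ℝ) :
    ∑ i, |(if Y i ≤ z then (1 : ℝ) else 0) - if X i ≤ z then 1 else 0| =
      |(#{i | Y i ≤ z} : ℝ) - #{i | X i ≤ z}| := by
  rcases le_total #{i | Y i ≤ z} #{i | X i ≤ z} with h | h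
  · exact sum_abs_ite_sub_ite_of_imp fun i hi =>
      (hX.lt_card_filter_le_iff i z).1 (((hY.lt_card_filter_le_iff i z).2 hi).trans_le h)
  · simp_rw [abs_sub_comm (if Y _ ≤ z then _ else _), abs_sub_comm (#{i | Y i ≤ z} : ℝ)]
    exact sum_abs_ite_sub_ite_of_imp fun i hi =>
      (hY.lt_card_filter_le_iff i z).1 (((hX.lt_card_filter_le_iff i z).2 hi).trans_le h)

theorem Monotone.sum_abs_sub_le {N : ℕ} {Y X : Fin N → ℝ} (hY : Monotone Y) (hX : Monotone X)
    {lo hi D : ℝ} (hlo : lo ≤ hi) (hYmem : ∀ i, Y i ∈ Set.Icc lo hi)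
    (hXmem : ∀ i, X i ∈ Set.Icc lo hi)
    (hD : ∀ z, |(#{i | Y i ≤ z} : ℝ) - #{i | X i ≤ z}| ≤ D) :
    ∑ i, |Y i - X i| ≤ D * (hi - lo) := by
  have hint (i : Fin N) : IntegrableOn
      (fun z => |(if Y i ≤ z then (1 : ℝ) else 0) - if X i ≤ z then 1 else 0|) (Set.Ico lo hi) := by
    simp_rw [abs_ite_le_sub_ite_le]
    exact (integrableOn_const measure_Ico_lt_top.ne).indicator measurableSet_Ico
  calc ∑ i, |Y i - X i|
      = ∫ z in Set.Ico lo hi, ∑ i,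
          |(if Y i ≤ z then (1 : ℝ) else 0) - if X i ≤ z then 1 else 0| := by
        rw [integral_finsetSum _ fun i _ => hint i]
        exact sum_congr rfl fun i _ => abs_sub_eq_integral_abs_ite_le_sub (hYmem i) (hXmem i)
    _ ≤ ∫ _ in Set.Ico lo hi, D := by
        refine setIntegral_mono_on (integrable_finsetSum _ fun i _ => hint i)
          (integrableOn_const measure_Ico_lt_top.ne) measurableSet_Ico fun z _ => ?_
        rw [hY.sum_abs_ite_le_sub_ite_le hX]
        exact hD z
    _ = D * (hi - lo) := by
        rw [setIntegral_const, Real.volume_real_Ico_of_le hlo, smul_eq_mul, mul_comm]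

lemma Function.Embedding.card_filter_comp_le {α β : Type*} [Fintype α] [Fintype β] (ι : α ↪ β)
    (p : β → Prop) [DecidablePred p] : #{a | p (ι a)} ≤ #{b | p b} :=
  card_le_card_of_injOn ι (fun a ha => by simpa using ha) ι.injective.injOn

lemma Function.Embedding.card_filter_add_card_le {α β : Type*} [Fintype α] [Fintype β]
    (ι : α ↪ β) (p : β → Prop) [DecidablePred p] :
    #{b | p b} + Fintype.card α ≤ #{a | p (ι a)} + Fintype.card β := by
  have hα : #{a | p (ι a)} + #{a | ¬ p (ι a)} = Fintype.card α :=
    card_filter_add_card_filter_not _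
  have hβ : #{b | p b} + #{b | ¬ p b} = Fintype.card β := card_filter_add_card_filter_not _
  have := ι.card_filter_comp_le (fun b => ¬ p b)
  omega

lemma card_filter_divNat {m k : ℕ} (p : Fin m → Prop) [DecidablePred p] :
    #{i : Fin (m * k) | p i.divNat} = k * #{j | p j} := by
  rw [card_equiv finProdFinEquiv.symm (t := ({j | p j} : Finset (Fin m)) ×ˢ (univ : Finset (Fin k)))
      (by simp [finProdFinEquiv_symm_apply]), card_product, card_univ, Fintype.card_fin, mul_comm]

lemma Fin.divNat_monotone {m k : ℕ} : Monotone (Fin.divNat : Fin (m * k) → Fin m) :=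
  fun a b h => by
    rw [Fin.le_def, Fin.coe_divNat, Fin.coe_divNat]
    exact Nat.div_le_div_right h

theorem sum_abs_sort_sample_divNat_sub_le {m k : ℕ} [NeZero k] (x : Fin (m * k) → ℝ)
    (ι : Fin m ↪ Fin (m * k)) {lo hi : ℝ} (hlo : lo ≤ hi) (hx : ∀ i, x i ∈ Set.Icc lo hi) :
    ∑ i : Fin (m * k), |(x ∘ ι) (Tuple.sort (x ∘ ι) i.divNat) - x (Tuple.sort x i)| ≤
      ((m * k : ℕ) - m : ℝ) * (hi - lo) := by
  refine ((Tuple.monotone_sort (x ∘ ι)).comp Fin.divNat_monotone).sum_abs_sub_le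
    (Tuple.monotone_sort x) hlo (fun i => hx _) (fun i => hx _) fun z => ?_
  have hY : #{i : Fin (m * k) | (x ∘ ι) (Tuple.sort (x ∘ ι) i.divNat) ≤ z} =
      k * #{j | x (ι j) ≤ z} := by
    rw [card_filter_divNat (fun j => (x ∘ ι) (Tuple.sort (x ∘ ι) j) ≤ z), card_filter_sort_le]
    rfl
  have hsample : (#{j | x (ι j) ≤ z} : ℝ) ≤ #{i | x i ≤ z} := by
    exact_mod_cast ι.card_filter_comp_le fun i => x i ≤ z
  have hpop : (#{i | x i ≤ z} : ℝ) + m ≤ #{j | x (ι j) ≤ z} + m * k := by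
    exact_mod_cast (by simpa using ι.card_filter_add_card_le fun i => x i ≤ z)
  have hsample_le : (#{j | x (ι j) ≤ z} : ℝ) ≤ m := by
    exact_mod_cast (card_filter_le _ _).trans_eq (card_fin m)
  have hk : (1 : ℝ) ≤ k := by exact_mod_cast NeZero.one_le
  simp only [Function.comp_apply] at hY ⊢
  rw [hY, card_filter_sort_le x z, abs_le]
  push_cast
  constructor <;> nlinarith

theorem abs_sum_cellIntegral_sort_sample_sub_le {m k : ℕ} [NeZero k] {f : ℝ → ℝ}
    {M lo hi : ℝ} (hf : IntervalIntegrable f volume 0 1) (hM : ∀ t ∈ Set.Ioo (0 : ℝ) 1, |f t| ≤ M)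
    (x : Fin (m * k) → ℝ) (hlo : lo ≤ hi) (hx : ∀ i, x i ∈ Set.Icc lo hi)
    (ι : Fin m ↪ Fin (m * k)) :
    |∑ j : Fin m, cellIntegral f m j * (x ∘ ι) (Tuple.sort (x ∘ ι) j) -
        ∑ i : Fin (m * k), cellIntegral f (m * k) i * x (Tuple.sort x i)| ≤
      ((m * k : ℕ) - m : ℝ) / (m * k : ℕ) * M * (hi - lo) := by
  have hM₀ : 0 ≤ M := (abs_nonneg _).trans (hM (1 / 2) (by norm_num))
  rw [sum_cellIntegral_mul_eq_sum_divNat (k := k) hf, ← sum_sub_distrib]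
  calc |∑ i : Fin (m * k), (cellIntegral f (m * k) i * (x ∘ ι) (Tuple.sort (x ∘ ι) i.divNat) -
          cellIntegral f (m * k) i * x (Tuple.sort x i))|
      ≤ ∑ i : Fin (m * k), |cellIntegral f (m * k) i| *
          |(x ∘ ι) (Tuple.sort (x ∘ ι) i.divNat) - x (Tuple.sort x i)| := by
        simp_rw [← mul_sub, ← abs_mul]
        exact abs_sum_le_sum_abs _ _
    _ ≤ ∑ i : Fin (m * k), M / (m * k : ℕ) *
          |(x ∘ ι) (Tuple.sort (x ∘ ι) i.divNat) - x (Tuple.sort x i)| := by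
        gcongr with i
        exact abs_cellIntegral_le hM i.isLt
    _ ≤ M / (m * k : ℕ) * (((m * k : ℕ) - m : ℝ) * (hi - lo)) := by
        rw [← mul_sum]
        gcongr
        exact sum_abs_sort_sample_divNat_sub_le x ι hlo hx
    _ = ((m * k : ℕ) - m : ℝ) / (m * k : ℕ) * M * (hi - lo) := by ring

lemma natCast_mul_sum_embedding_apply {m n : ℕ} [NeZero n] (x : Fin n → ℝ) (j : Fin m) :
    (n : ℝ) * ∑ ι : Fin m ↪ Fin n, x (ι j) = Fintype.card (Fin m ↪ Fin n) * ∑ i, x i := by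
  have hshift (c : Fin n) : ∑ ι : Fin m ↪ Fin n, x (ι j + c) = ∑ ι : Fin m ↪ Fin n, x (ι j) :=
    (Equiv.embeddingCongr (Equiv.refl _) (Equiv.addRight c)).sum_comp fun κ => x (κ j)
  calc (n : ℝ) * ∑ ι : Fin m ↪ Fin n, x (ι j)
      = ∑ c : Fin n, ∑ ι : Fin m ↪ Fin n, x (ι j + c) := by
        simp [hshift]
    _ = ∑ ι : Fin m ↪ Fin n, ∑ i, x i := by
        rw [sum_comm]
        exact sum_congr rfl fun ι _ => Equiv.sum_comp (Equiv.addLeft (ι j)) x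
    _ = Fintype.card (Fin m ↪ Fin n) * ∑ i, x i := by simp

lemma sum_embedding_mean {m n : ℕ} [NeZero m] [NeZero n] (x : Fin n → ℝ) :
    ∑ ι : Fin m ↪ Fin n, (∑ j, x (ι j)) / m =
      Fintype.card (Fin m ↪ Fin n) * ((∑ i, x i) / n) := by
  have hn : (n : ℝ) ≠ 0 := NeZero.ne _
  have hm : (m : ℝ) ≠ 0 := NeZero.ne _
  have hj (j : Fin m) :
      ∑ ι : Fin m ↪ Fin n, x (ι j) = Fintype.card (Fin m ↪ Fin n) * (∑ i, x i) / n := by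
    rw [eq_div_iff hn, mul_comm]
    exact natCast_mul_sum_embedding_apply x j
  rw [← sum_div, sum_comm, sum_congr rfl fun j _ => hj j, sum_const, card_univ,
    Fintype.card_fin, nsmul_eq_mul]
  field_simp

lemma bddAbove_image_abs_sub {S : Set ℝ} {f : ℝ → ℝ} (hf : BddAbove ((fun t => |f t|) '' S))
    (c : ℝ) : BddAbove ((fun t => |f t - c|) '' S) := by
  obtain ⟨b, hb⟩ := hf
  refine ⟨b + |c|, Set.forall_mem_image.2 fun t ht => (abs_sub _ _).trans ?_⟩
  gcongr
  exact hb (Set.mem_image_of_mem _ ht)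

lemma abs_sum_div_card_sub_le {α : Type*} [Fintype α] [Nonempty α] {f : α → ℝ} {c B : ℝ}
    (h : ∀ a, |f a - c| ≤ B) : |(∑ a, f a) / Fintype.card α - c| ≤ B := by
  have hcard : (0 : ℝ) < Fintype.card α := by exact_mod_cast Fintype.card_pos
  have hsub : (∑ a, f a) / Fintype.card α - c = (∑ a, (f a - c)) / Fintype.card α := by
    rw [sum_sub_distrib, sum_const, card_univ, nsmul_eq_mul]
    field_simp
  rw [hsub, abs_div, abs_of_pos hcard, div_le_iff₀ hcard]
  calc |∑ a, (f a - c)| ≤ ∑ a, |f a - c| := abs_sum_le_sum_abs _ _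
    _ ≤ ∑ _a : α, B := sum_le_sum fun a _ => h a
    _ = B * Fintype.card α := by rw [sum_const, card_univ, nsmul_eq_mul, mul_comm]

theorem stmt9_general {n m : ℕ} [NeZero n] [NeZero m] (hdvd : m ∣ n)
    (x : Fin n → ℝ)
    (s : ℝ → ℝ)
    (hs_density : ∫ t in Set.Ioo (0 : ℝ) 1, s t = 1)
    (hs_bdd : BddAbove ((fun t => |s t|) '' Set.Ioo (0 : ℝ) 1))
    (xmin xmax : ℝ) (hmax : IsGreatest (Set.range x) xmax) (hmin : IsLeast (Set.range x) xmin) :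
    |(∑ ι : Fin m ↪ Fin n, Lfun s (empCDF (fun j => x (ι j)))) /
          (Fintype.card (Fin m ↪ Fin n) : ℝ) -
        Lfun s (empCDF x)| ≤
      ((n : ℝ) - m) / n * sSup ((fun t => |s t - 1|) '' Set.Ioo (0 : ℝ) 1) * (xmax - xmin) := by
  obtain ⟨k, rfl⟩ := hdvd
  have : NeZero k := ⟨right_ne_zero_of_mul (NeZero.ne (m * k))⟩
  have : Nonempty (Fin m ↪ Fin (m * k)) :=
    ⟨Fin.castLEEmb (Nat.le_mul_of_pos_right m (NeZero.pos k))⟩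
  have hs : IntervalIntegrable s volume 0 1 :=
    (intervalIntegrable_iff_integrableOn_Ioo_of_le zero_le_one).2
      (Integrable.of_integral_ne_zero (by rw [hs_density]; exact one_ne_zero))
  have hM (t : ℝ) (ht : t ∈ Set.Ioo (0 : ℝ) 1) :
      |s t - 1| ≤ sSup ((fun t => |s t - 1|) '' Set.Ioo (0 : ℝ) 1) :=
    le_csSup (bddAbove_image_abs_sub hs_bdd 1) (Set.mem_image_of_mem _ ht)
  have hx (i : Fin (m * k)) : x i ∈ Set.Icc xmin xmax := ⟨hmin.2 ⟨i, rfl⟩, hmax.2 ⟨i, rfl⟩⟩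
  simp_rw [Lfun_empCDF_eq_add_mean hs]
  rw [sum_add_distrib, add_div, sum_embedding_mean x, mul_div_cancel_left₀ _
    (Nat.cast_ne_zero.2 Fintype.card_ne_zero), add_sub_add_right_eq_sub]
  exact abs_sum_div_card_sub_le fun ι =>
    abs_sum_cellIntegral_sort_sample_sub_le (hs.sub intervalIntegrable_const) hM x
      (hmin.2 hmax.1) hx ι

/-- For a sample of `m` points drawn uniformly without replacement from
`x₁, ..., xₙ` (the expectation is the average over all injections `Fin m ↪ Fin n`),
`|E[𝕃ₛ[F_{n,m}]] − 𝕃ₛ[Fₙ]| ≤ ((n−m)/n) ‖s − u‖_∞ (x₍ₙ₎ − x₍₁₎)` for a bounded probability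
density `s` on `(0,1)`, where `u ≡ 1` is the uniform density. -/
theorem stmt9 {n m : ℕ} [NeZero n] [NeZero m] (hdvd : m ∣ n) (hle : m ≤ n)
    (x : Fin n → ℝ)
    (s : ℝ → ℝ)
    (hs_nonneg : ∀ t ∈ Set.Ioo (0 : ℝ) 1, 0 ≤ s t)
    (hs_density : ∫ t in Set.Ioo (0 : ℝ) 1, s t = 1)
    (hs_bdd : BddAbove ((fun t => |s t|) '' Set.Ioo (0 : ℝ) 1))
    (xmin xmax : ℝ) (hmax : IsGreatest (Set.range x) xmax) (hmin : IsLeast (Set.range x) xmin) :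
    |(∑ ι : Fin m ↪ Fin n, Lfun s (empCDF (fun j => x (ι j)))) /
          (Fintype.card (Fin m ↪ Fin n) : ℝ) -
        Lfun s (empCDF x)| ≤
      ((n : ℝ) - m) / n * sSup ((fun t => |s t - 1|) '' Set.Ioo (0 : ℝ) 1) * (xmax - xmin) :=
  stmt9_general hdvd x s hs_density hs_bdd xmin xmax hmax hmin
end

section
/- Let σ ∈ ℝⁿ have non-negative entries, let P(σ) be the permutahedron generated by σ, let Ω : ℝⁿ → ℝ, and for ν > 0 define h_{νΩ}(l) := max_{λ ∈ P(σ)} { ⟨λ, l⟩ − ν Ω(λ) }. Then: (i) for every l, l' ∈ ℝⁿ and every p ∈ [1, ∞], |h_{νΩ}(l) − h_{νΩ}(l')| ≤ ‖σ‖_p ‖l − l'‖_{p'}, where p' is the Hölder conjugate of p (1/p + 1/p' = 1); and (ii) if Ω is 1-strongly convex with respect to a norm ‖·‖ on ℝⁿ, then the maximizer λ_ν(l) := argmax_{λ ∈ P(σ)} { ⟨λ, l⟩ − ν Ω(λ) } is unique for every l, and ‖λ_ν(l) − λ_ν(l')‖ ≤ ‖l − l'‖_* / ν for all l, l', where ‖·‖_*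 is the dual norm of ‖·‖. -/
open scoped ENNReal

/-- The permutahedron generated by `σ`: the image of `σ` under all doubly stochastic
matrices. -/
def permutahedron {n : ℕ} (σ : Fin n → ℝ) : Set (Fin n → ℝ) :=
  {lam | ∃ P : Matrix (Fin n) (Fin n) ℝ,
    (∀ i j, P i j ∈ Set.Icc (0 : ℝ) 1) ∧ (∀ i, ∑ j, P i j = 1) ∧ (∀ j, ∑ i, P i j = 1) ∧
    lam = P.mulVec σ}

/-- The standard pairing `⟨a, b⟩ = ∑ᵢ aᵢ bᵢ` on `ℝⁿ`. -/
def dotp {n : ℕ} (a b : Fin n → ℝ) : ℝ := ∑ i, a i * b i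

/-- `h_{νΩ}(l) = max_{λ ∈ P(σ)} { ⟨λ, l⟩ − ν Ω(λ) }` (via `sSup`). -/
noncomputable def smoothedMax {n : ℕ} (σ : Fin n → ℝ) (Om : (Fin n → ℝ) → ℝ) (ν : ℝ)
    (l : Fin n → ℝ) : ℝ :=
  sSup ((fun lam => dotp lam l - ν * Om lam) '' permutahedron σ)

/-- Subgradients of `Ω` at `x` with respect to the pairing `dotp`. -/
def subgrad {n : ℕ} (Om : (Fin n → ℝ) → ℝ) (x : Fin n → ℝ) : Set (Fin n → ℝ) :=
  {g | ∀ y, Om x + dotp g (y - x) ≤ Om y}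

/-- The dual norm `‖z‖_* = sup {⟨z, x⟩ : N(x) ≤ 1}` of a norm `N`. -/
noncomputable def dualNorm {n : ℕ} (N : (Fin n → ℝ) → ℝ) (z : Fin n → ℝ) : ℝ :=
  sSup ((fun x => dotp z x) '' {x | N x ≤ 1})

/-!
Part (i): `h_{νΩ}(l) - h_{νΩ}(l')` is a difference of suprema of two functions of `λ` that differ
by `⟨λ, l - l'⟩`, which Hölder bounds by `‖λ‖_p ‖l - l'‖_q`; and by Birkhoff's theorem `P(σ)` is
the convex hull of the coordinate permutations of `σ`, all of which have the same `p`-norm.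

Part (ii): strong convexity of `Ω` makes `λ ↦ ⟨λ, l⟩ - νΩ(λ)` drop by at least
`(ν/2) ‖λ_ν(l) - λ‖²` away from its maximiser on the convex set `P(σ)`. Adding this at
`λ_ν(l)` and at `λ_ν(l')` gives `ν ‖λ_ν(l) - λ_ν(l')‖² ≤ ⟨l - l', λ_ν(l) - λ_ν(l')⟩`, which the
dual norm bounds by `‖l - l'‖_* ‖λ_ν(l) - λ_ν(l')‖`.
-/

open Set Matrix

lemma dotp_eq_dotProduct {n : ℕ} (a b : Fin n → ℝ) : dotp a b = a ⬝ᵥ b := rfl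

section Permutahedron

variable {n : ℕ}

lemma permutahedron_eq_image_doublyStochastic (σ : Fin n → ℝ) :
    permutahedron σ =
      (· *ᵥ σ) '' (doublyStochastic ℝ (Fin n) : Set (Matrix (Fin n) (Fin n) ℝ)) := by
  ext lam
  constructor
  · rintro ⟨P, hP, hrow, hcol, rfl⟩
    exact ⟨P, mem_doublyStochastic_iff_sum.2 ⟨fun i j => (hP i j).1, hrow, hcol⟩, rfl⟩
  · rintro ⟨P, hP, rfl⟩
    obtain ⟨-, hrow, hcol⟩ := mem_doublyStochastic_iff_sum.1 hP
    exact ⟨P, fun i j => ⟨nonneg_of_mem_doublyStochastic hP, le_one_of_mem_doublyStochastic hP⟩,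
      hrow, hcol, rfl⟩

lemma permutahedron_eq_convexHull (σ : Fin n → ℝ) :
    permutahedron σ = convexHull ℝ (range fun τ : Equiv.Perm (Fin n) => σ ∘ τ) := by
  have hlin : IsLinearMap ℝ fun M : Matrix (Fin n) (Fin n) ℝ => M *ᵥ σ :=
    ⟨fun M N => add_mulVec M N σ, fun c M => smul_mulVec c M σ⟩
  rw [permutahedron_eq_image_doublyStochastic, doublyStochastic_eq_convexHull_permMatrix,
    hlin.image_convexHull]
  congr 1
  ext v
  simp [permMatrix_mulVec]

lemma convex_permutahedron (σ : Fin n → ℝ) : Convex ℝ (permutahedron σ) :=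
  permutahedron_eq_convexHull σ ▸ convex_convexHull ℝ _

lemma isCompact_permutahedron (σ : Fin n → ℝ) : IsCompact (permutahedron σ) :=
  permutahedron_eq_convexHull σ ▸ (finite_range _).isCompact_convexHull ℝ

lemma self_mem_permutahedron (σ : Fin n → ℝ) : σ ∈ permutahedron σ :=
  permutahedron_eq_convexHull σ ▸ subset_convexHull ℝ _ ⟨1, rfl⟩

lemma norm_toLp_le_of_mem_permutahedron (p : ℝ≥0∞) [Fact (1 ≤ p)] {σ lam : Fin n → ℝ}
    (h : lam ∈ permutahedron σ) : ‖WithLp.toLp p lam‖ ≤ ‖WithLp.toLp p σ‖ := by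
  rw [permutahedron_eq_convexHull] at h
  have hball : Convex ℝ
      (WithLp.toLp p ⁻¹' Metric.closedBall (0 : PiLp p fun _ : Fin n => ℝ) ‖WithLp.toLp p σ‖) :=
    (convex_closedBall _ _).linear_preimage (WithLp.linearEquiv p ℝ (Fin n → ℝ)).symm.toLinearMap
  refine mem_closedBall_zero_iff.1 (convexHull_min ?_ hball h)
  rintro _ ⟨τ, rfl⟩
  have hτ : LinearIsometryEquiv.piLpCongrLeft p ℝ ℝ τ.symm (WithLp.toLp p σ) =
      WithLp.toLp p (σ ∘ τ) := by
    ext i; simp [Equiv.piCongrLeft']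
  have := (LinearIsometryEquiv.piLpCongrLeft p ℝ ℝ τ.symm).norm_map (WithLp.toLp p σ)
  rw [hτ] at this
  simp only [Metric.mem_closedBall, dist_zero_right, mem_preimage]
  exact this.le

end Permutahedron

section Holder

variable {n : ℕ}

lemma abs_dotp_le_sum_abs_mul (a b : Fin n → ℝ) : |dotp a b| ≤ ∑ i, |a i| * |b i| := by
  simpa only [dotp, abs_mul] using Finset.abs_sum_le_sum_abs (fun i => a i * b i) Finset.univ

lemma sum_abs_mul_le_norm_top_mul_norm_one (a b : Fin n → ℝ) :
    ∑ i, |a i| * |b i| ≤ ‖WithLp.toLp ∞ a‖ * ‖WithLp.toLp 1 b‖ := by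
  rw [PiLp.norm_eq_of_L1, Finset.mul_sum]
  gcongr with i
  · exact PiLp.norm_apply_le (WithLp.toLp ∞ a) i
  · rfl

lemma sum_abs_mul_le_norm_mul_norm (p q : ℝ≥0∞) [hpq : p.HolderConjugate q]
    (a b : Fin n → ℝ) :
    ∑ i, |a i| * |b i| ≤ ‖WithLp.toLp p a‖ * ‖WithLp.toLp q b‖ := by
  by_cases hp : p = ∞
  · obtain rfl := hp
    obtain rfl : q = 1 := (ENNReal.HolderConjugate.eq_top_iff_eq_one ∞ q).1 rfl
    exact sum_abs_mul_le_norm_top_mul_norm_one a b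
  by_cases hq : q = ∞
  · obtain rfl := hq
    obtain rfl : p = 1 := (ENNReal.HolderConjugate.eq_top_iff_eq_one ∞ p).1 rfl
    simpa only [mul_comm] using sum_abs_mul_le_norm_top_mul_norm_one b a
  have hpq' := ENNReal.HolderConjugate.toReal_of_ne_top hp hq
  rw [PiLp.norm_eq_sum (by linarith [hpq'.lt]), PiLp.norm_eq_sum hpq'.symm.pos]
  simpa only [PiLp.toLp_apply, Real.norm_eq_abs, abs_abs] using
    Real.inner_le_Lp_mul_Lq Finset.univ (fun i => |a i|) (fun i => |b i|) hpq'

lemma abs_dotp_le_norm_mul_norm (p q : ℝ≥0∞) [p.HolderConjugate q] (a b : Fin n → ℝ) :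
    |dotp a b| ≤ ‖WithLp.toLp p a‖ * ‖WithLp.toLp q b‖ :=
  (abs_dotp_le_sum_abs_mul a b).trans (sum_abs_mul_le_norm_mul_norm p q a b)

end Holder

section SSupPerturbation

variable {α : Type*} {s : Set α} {f g : α → ℝ} {C : ℝ}

lemma bddAbove_image_of_le_add (h : ∀ x ∈ s, f x ≤ g x + C) (hg : BddAbove (g '' s)) :
    BddAbove (f '' s) := by
  obtain ⟨M, hM⟩ := hg
  refine ⟨M + C, ?_⟩
  rintro _ ⟨x, hx, rfl⟩
  linarith [h x hx, hM ⟨x, hx, rfl⟩]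

lemma sSup_image_le_sSup_image_add (hC : 0 ≤ C) (h : ∀ x ∈ s, f x ≤ g x + C)
    (hg : BddAbove (g '' s)) : sSup (f '' s) ≤ sSup (g '' s) + C := by
  rcases s.eq_empty_or_nonempty with rfl | hs
  · simpa using hC
  refine csSup_le (hs.image f) ?_
  rintro _ ⟨x, hx, rfl⟩
  linarith [h x hx, le_csSup hg ⟨x, hx, rfl⟩]

/-- The junk value `sSup = 0` of an unbounded set is harmless here: `f '' s` and `g '' s` are
bounded or unbounded together. -/
lemma abs_sSup_image_sub_sSup_image_le (hC : 0 ≤ C) (h : ∀ x ∈ s, |f x - g x| ≤ C) :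
    |sSup (f '' s) - sSup (g '' s)| ≤ C := by
  have hfg : ∀ x ∈ s, f x ≤ g x + C := fun x hx => by linarith [(abs_le.1 (h x hx)).2]
  have hgf : ∀ x ∈ s, g x ≤ f x + C := fun x hx => by linarith [(abs_le.1 (h x hx)).1]
  by_cases hg : BddAbove (g '' s)
  · have hf := bddAbove_image_of_le_add hfg hg
    rw [abs_sub_le_iff]
    constructor
    · linarith [sSup_image_le_sSup_image_add hC hfg hg]
    · linarith [sSup_image_le_sSup_image_add hC hgf hf]
  · have hf : ¬ BddAbove (f '' s) := fun hf => hg (bddAbove_image_of_le_add hgf hf)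
    simpa [Real.sSup_of_not_bddAbove hf, Real.sSup_of_not_bddAbove hg] using hC

end SSupPerturbation

theorem abs_smoothedMax_sub_le {n : ℕ} (σ : Fin n → ℝ) (Om : (Fin n → ℝ) → ℝ) (ν : ℝ)
    (p q : ℝ≥0∞) [p.HolderConjugate q] (l l' : Fin n → ℝ) :
    |smoothedMax σ Om ν l - smoothedMax σ Om ν l'| ≤
      ‖WithLp.toLp p σ‖ * ‖WithLp.toLp q (l - l')‖ := by
  have : Fact (1 ≤ p) := ⟨ENNReal.HolderConjugate.one_le p q⟩
  have : Fact (1 ≤ q) := ⟨ENNReal.HolderConjugate.one_le q p⟩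
  refine abs_sSup_image_sub_sSup_image_le
    (mul_nonneg (norm_nonneg _) (norm_nonneg _)) fun lam hlam => ?_
  calc |dotp lam l - ν * Om lam - (dotp lam l' - ν * Om lam)| = |dotp lam (l - l')| := by
        simp only [dotp_eq_dotProduct, dotProduct_sub]; ring_nf
    _ ≤ ‖WithLp.toLp p lam‖ * ‖WithLp.toLp q (l - l')‖ := abs_dotp_le_norm_mul_norm p q _ _
    _ ≤ ‖WithLp.toLp p σ‖ * ‖WithLp.toLp q (l - l')‖ :=
        mul_le_mul_of_nonneg_right (norm_toLp_le_of_mem_permutahedron p hlam) (norm_nonneg _)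

section Subgradient

/-- The subgradient is read off a hyperplane separating `(x, f x)` from the open strict epigraph
of `f`, normalised to have vertical component `-1`. -/
lemma ConvexOn.exists_subgradient {E : Type*} [TopologicalSpace E] [AddCommGroup E]
    [IsTopologicalAddGroup E] [Module ℝ E] [ContinuousSMul ℝ E] {f : E → ℝ}
    (hf : ConvexOn ℝ univ f) (hcont : Continuous f) (x : E) :
    ∃ φ : StrongDual ℝ E, ∀ y, f x + φ (y - x) ≤ f y := by
  set A : Set (E × ℝ) := {p | f p.1 < p.2}
  have hA_open : IsOpen A := isOpen_lt (hcont.comp continuous_fst) continuous_snd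
  have hA_convex : Convex ℝ A := by
    rintro ⟨y₁, t₁⟩ h₁ ⟨y₂, t₂⟩ h₂ a b ha hb hab
    simp only [A, mem_ofPred_eq, Prod.smul_mk, Prod.mk_add_mk, smul_eq_mul] at h₁ h₂ ⊢
    calc f (a • y₁ + b • y₂) ≤ a * f y₁ + b * f y₂ := hf.2 trivial trivial ha hb hab
      _ < a * t₁ + b * t₂ := by
        rcases ha.eq_or_lt with rfl | ha'
        · simp only [zero_add] at hab; subst hab; simpa using h₂
        · nlinarith
  obtain ⟨Φ, hΦ⟩ := geometric_hahn_banach_open_point hA_convex hA_open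
    (show (x, f x) ∉ A from lt_irrefl (f x))
  set c := Φ (0, 1)
  have hsplit : ∀ y t, Φ (y, t) = Φ (y, 0) + t * c := fun y t => by
    rw [← smul_eq_mul, ← map_smul, ← map_add]; simp
  have hc : c < 0 := by
    have := hΦ (x, f x + 1) (show f x < f x + 1 by linarith)
    rw [hsplit, hsplit x (f x)] at this
    linarith
  refine ⟨(-c)⁻¹ • Φ.comp (ContinuousLinearMap.inl ℝ E ℝ), fun y => ?_⟩
  refine le_of_forall_gt_imp_ge_of_dense fun t ht => ?_
  have := hΦ (y, t) ht
  rw [hsplit, hsplit x (f x)] at this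
  have hsub : Φ (y - x, 0) = Φ (y, 0) - Φ (x, 0) := by rw [← map_sub]; simp
  simp only [_root_.smul_apply, ContinuousLinearMap.comp_apply,
    ContinuousLinearMap.inl_apply, smul_eq_mul, hsub]
  rw [← le_sub_iff_add_le', inv_mul_le_iff₀ (neg_pos.2 hc)]
  nlinarith

lemma exists_mem_subgrad {n : ℕ} {Om : (Fin n → ℝ) → ℝ} (hOm : ConvexOn ℝ univ Om)
    (x : Fin n → ℝ) : ∃ g, g ∈ subgrad Om x := by
  obtain ⟨φ, hφ⟩ := hOm.exists_subgradient
    (continuousOn_univ.1 (hOm.continuousOn isOpen_univ)) x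
  classical
  refine ⟨fun i => φ fun j => if i = j then 1 else 0, fun y => ?_⟩
  convert hφ y using 2
  rw [← ContinuousLinearMap.coe_coe, LinearMap.pi_apply_eq_sum_univ]
  simp [dotp, mul_comm]

end Subgradient

lemma IsMaxOn.add_le_of_segment {E : Type*} [AddCommGroup E] [Module ℝ E] {S : Set E}
    {F : E → ℝ} {x y : E} {c : ℝ} (hS : Convex ℝ S) (hx : x ∈ S) (hy : y ∈ S)
    (hmax : IsMaxOn F S x)
    (hF : ∀ t ∈ Ioo (0 : ℝ) 1,
      (1 - t) * F x + t * F y + (1 - t) * t * c ≤ F ((1 - t) • x + t • y)) :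
    F y + c ≤ F x := by
  have hsegment : ∀ t ∈ Ioo (0 : ℝ) 1, F y + (1 - t) * c ≤ F x := by
    rintro t ⟨ht₀, ht₁⟩
    have hz : F ((1 - t) • x + t • y) ≤ F x :=
      isMaxOn_iff.1 hmax _ (hS hx hy (by linarith) ht₀.le (by ring))
    have := hF t ⟨ht₀, ht₁⟩
    refine le_of_mul_le_mul_left ?_ ht₀
    nlinarith
  have hlim : Filter.Tendsto (fun t : ℝ => F y + (1 - t) * c) (nhdsWithin 0 (Ioi 0))
      (nhds (F y + c)) :=
    tendsto_nhdsWithin_of_tendsto_nhds ((Continuous.tendsto' (by fun_prop) 0 _ (by simp)))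
  exact le_of_tendsto hlim (Filter.mem_of_superset (Ioo_mem_nhdsGT one_pos) hsegment)

def StrongConvexWrt {n : ℕ} (N Om : (Fin n → ℝ) → ℝ) : Prop :=
  ∀ x y g, g ∈ subgrad Om x → Om x + dotp g (y - x) + N (y - x) ^ 2 / 2 ≤ Om y

section StrongConvexity

variable {n : ℕ} {N Om : (Fin n → ℝ) → ℝ}

lemma StrongConvexWrt.combo_add_le (hsc : StrongConvexWrt N Om)
    (hNh : ∀ (c : ℝ) x, N (c • x) = |c| * N x) (hOm : ConvexOn ℝ univ Om)
    (x y : Fin n → ℝ) {a b : ℝ} (ha : 0 ≤ a) (hb : 0 ≤ b) (hab : a + b = 1) :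
    Om (a • x + b • y) + a * b * N (x - y) ^ 2 / 2 ≤ a * Om x + b * Om y := by
  obtain rfl : a = 1 - b := by linarith
  set m := (1 - b) • x + b • y
  obtain ⟨g, hg⟩ := exists_mem_subgrad hOm m
  have hx : x - m = b • (x - y) := by module
  have hy : y - m = (-(1 - b)) • (x - y) := by module
  have h₁ := hsc m x g hg
  have h₂ := hsc m y g hg
  rw [hx, hNh, abs_of_nonneg hb, dotp_eq_dotProduct, dotProduct_smul, smul_eq_mul] at h₁
  rw [hy, hNh, abs_neg, abs_of_nonneg ha, dotp_eq_dotProduct, dotProduct_smul,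
    smul_eq_mul] at h₂
  nlinarith [mul_le_mul_of_nonneg_left h₁ ha, mul_le_mul_of_nonneg_left h₂ hb]

lemma StrongConvexWrt.add_sq_le_of_isMaxOn (hsc : StrongConvexWrt N Om)
    (hNh : ∀ (c : ℝ) x, N (c • x) = |c| * N x) (hOm : ConvexOn ℝ univ Om) {ν : ℝ} (hν : 0 ≤ ν)
    {S : Set (Fin n → ℝ)} (hS : Convex ℝ S) {l lam y : Fin n → ℝ} (hlam : lam ∈ S) (hy : y ∈ S)
    (hmax : IsMaxOn (fun x => dotp x l - ν * Om x) S lam) :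
    dotp y l - ν * Om y + ν * N (lam - y) ^ 2 / 2 ≤ dotp lam l - ν * Om lam := by
  refine hmax.add_le_of_segment hS hlam hy fun t ⟨ht₀, ht₁⟩ => ?_
  have hOm_t := hsc.combo_add_le hNh hOm lam y (a := 1 - t) (by linarith) ht₀.le (by ring)
  have hdotp : dotp ((1 - t) • lam + t • y) l = (1 - t) * dotp lam l + t * dotp y l := by
    simp only [dotp_eq_dotProduct, add_dotProduct, smul_dotProduct, smul_eq_mul]
  simp only [hdotp]
  nlinarith [mul_le_mul_of_nonneg_left hOm_t hν]

lemma StrongConvexWrt.mul_sq_le_dotp_sub (hsc : StrongConvexWrt N Om)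
    (hNh : ∀ (c : ℝ) x, N (c • x) = |c| * N x) (hOm : ConvexOn ℝ univ Om) {ν : ℝ} (hν : 0 ≤ ν)
    {S : Set (Fin n → ℝ)} (hS : Convex ℝ S) {l l' lam lam' : Fin n → ℝ}
    (hlam : lam ∈ S) (hmax : IsMaxOn (fun x => dotp x l - ν * Om x) S lam)
    (hlam' : lam' ∈ S) (hmax' : IsMaxOn (fun x => dotp x l' - ν * Om x) S lam') :
    ν * N (lam - lam') ^ 2 ≤ dotp (l - l') (lam - lam') := by
  have h := hsc.add_sq_le_of_isMaxOn hNh hOm hν hS hlam hlam' hmax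
  have h' := hsc.add_sq_le_of_isMaxOn hNh hOm hν hS hlam' hlam hmax'
  have hsymm : N (lam' - lam) = N (lam - lam') := by
    rw [← neg_sub, ← neg_one_smul ℝ, hNh]; simp
  have hdotp : dotp (l - l') (lam - lam') =
      (dotp lam l - dotp lam' l) + (dotp lam' l' - dotp lam l') := by
    simp only [dotp_eq_dotProduct, sub_dotProduct, dotProduct_sub, dotProduct_comm l,
      dotProduct_comm l']
    ring
  rw [hsymm] at h'
  linarith

end StrongConvexity

lemma exists_pos_mul_norm_le {E : Type*} [NormedAddCommGroup E] [NormedSpace ℝ E]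
    [FiniteDimensional ℝ E] {N : E → ℝ} (hN0 : ∀ x, 0 ≤ N x) (hNd : ∀ x, N x = 0 → x = 0)
    (hNh : ∀ (c : ℝ) x, N (c • x) = |c| * N x) (hNt : ∀ x y, N (x + y) ≤ N x + N y) :
    ∃ c > 0, ∀ x, c * ‖x‖ ≤ N x := by
  rcases subsingleton_or_nontrivial E with hE | hE
  · exact ⟨1, one_pos, fun x => by simp [Subsingleton.elim x 0, hN0]⟩
  have hconvex : ConvexOn ℝ univ N := ⟨convex_univ, fun x _ y _ a b ha hb _ => by
    simpa only [hNh, abs_of_nonneg ha, abs_of_nonneg hb, smul_eq_mul] using hNt (a • x) (b • y)⟩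
  have hcont := continuousOn_univ.1 (hconvex.continuousOn isOpen_univ)
  obtain ⟨x₀, hx₀, hmin⟩ := (isCompact_sphere (0 : E) 1).exists_isMinOn
    (NormedSpace.sphere_nonempty.2 zero_le_one) hcont.continuousOn
  rw [mem_sphere_zero_iff_norm] at hx₀
  have hpos : 0 < N x₀ := (hN0 x₀).lt_of_ne' fun h => by simp [hNd x₀ h] at hx₀
  refine ⟨N x₀, hpos, fun x => ?_⟩
  rcases eq_or_ne x 0 with rfl | hx
  · simpa using hN0 0
  have hxpos := norm_pos_iff.2 hx
  have := isMinOn_iff.1 hmin (‖x‖⁻¹ • x) (by simp [norm_smul, hxpos.ne'])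
  rw [hNh, abs_of_pos (inv_pos.2 hxpos), le_inv_mul_iff₀ hxpos] at this
  linarith

section DualNorm

variable {n : ℕ} {N : (Fin n → ℝ) → ℝ} {c : ℝ}

lemma bddAbove_dotp_image_unitBall (hc : 0 < c) (hcN : ∀ x, c * ‖x‖ ≤ N x)
    (z : Fin n → ℝ) : BddAbove ((fun x => dotp z x) '' {x | N x ≤ 1}) := by
  refine ⟨‖WithLp.toLp 1 z‖ / c, ?_⟩
  rintro _ ⟨x, hx, rfl⟩
  have hxc : ‖x‖ ≤ 1 / c := by rw [le_div_iff₀ hc]; linarith [hcN x, hx.out]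
  calc dotp z x ≤ ‖WithLp.toLp 1 z‖ * ‖WithLp.toLp ∞ x‖ :=
        (le_abs_self _).trans (abs_dotp_le_norm_mul_norm 1 ∞ z x)
    _ ≤ ‖WithLp.toLp 1 z‖ * (1 / c) := by rw [PiLp.norm_toLp]; gcongr
    _ = ‖WithLp.toLp 1 z‖ / c := mul_one_div _ _

lemma dualNorm_nonneg (hc : 0 < c) (hcN : ∀ x, c * ‖x‖ ≤ N x)
    (hNh : ∀ (c : ℝ) x, N (c • x) = |c| * N x) (z : Fin n → ℝ) : 0 ≤ dualNorm N z := by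
  have hN_zero : N 0 = 0 := by simpa using hNh 0 0
  unfold dualNorm
  simpa [dotp] using le_csSup (bddAbove_dotp_image_unitBall hc hcN z)
    ⟨0, by simp [hN_zero], rfl⟩

lemma dotp_le_mul_dualNorm (hc : 0 < c) (hcN : ∀ x, c * ‖x‖ ≤ N x)
    (hNh : ∀ (c : ℝ) x, N (c • x) = |c| * N x) (z w : Fin n → ℝ) :
    dotp z w ≤ N w * dualNorm N z := by
  rcases eq_or_ne w 0 with rfl | hw
  · simpa [dotp] using mul_nonneg (hcN 0 |>.trans' (by simp)) (dualNorm_nonneg hc hcN hNh z)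
  have hNw : 0 < N w := (mul_pos hc (norm_pos_iff.2 hw)).trans_le (hcN w)
  have hunit : N ((N w)⁻¹ • w) ≤ 1 := by
    rw [hNh, abs_of_pos (inv_pos.2 hNw), inv_mul_cancel₀ hNw.ne']
  have : dotp z ((N w)⁻¹ • w) ≤ dualNorm N z :=
    le_csSup (bddAbove_dotp_image_unitBall hc hcN z) ⟨_, hunit, rfl⟩
  rw [dotp_eq_dotProduct, dotProduct_smul, smul_eq_mul, inv_mul_le_iff₀ hNw] at this
  exact this

end DualNorm

lemma exists_isMaxOn_permutahedron {n : ℕ} (σ : Fin n → ℝ) {Om : (Fin n → ℝ) → ℝ}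
    (hOm : ConvexOn ℝ univ Om) (ν : ℝ) (l : Fin n → ℝ) :
    ∃ lam ∈ permutahedron σ, IsMaxOn (fun x => dotp x l - ν * Om x) (permutahedron σ) lam := by
  have hcont : Continuous Om := continuousOn_univ.1 (hOm.continuousOn isOpen_univ)
  exact (isCompact_permutahedron σ).exists_isMaxOn ⟨σ, self_mem_permutahedron σ⟩
    (by unfold dotp; fun_prop)

theorem stmt12_general {n : ℕ} (σ : Fin n → ℝ)
    (Om : (Fin n → ℝ) → ℝ) (ν : ℝ) (hν : 0 < ν) :
    (∀ p q : ℝ≥0∞, 1 ≤ p → 1 / p + 1 / q = 1 → ∀ l l' : Fin n → ℝ,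
      |smoothedMax σ Om ν l - smoothedMax σ Om ν l'| ≤
        ‖(WithLp.equiv p (Fin n → ℝ)).symm σ‖ *
          ‖(WithLp.equiv q (Fin n → ℝ)).symm (l - l')‖) ∧
    (∀ N : (Fin n → ℝ) → ℝ,
      (∀ x, 0 ≤ N x) →
      (∀ x, N x = 0 → x = 0) →
      (∀ (c : ℝ) (x), N (c • x) = |c| * N x) →
      (∀ x y, N (x + y) ≤ N x + N y) →
      ConvexOn ℝ Set.univ Om →
      (∀ x y g, g ∈ subgrad Om x → Om x + dotp g (y - x) + N (y - x) ^ 2 / 2 ≤ Om y) →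
      (∀ l : Fin n → ℝ, ∃! lam, lam ∈ permutahedron σ ∧
        IsMaxOn (fun x => dotp x l - ν * Om x) (permutahedron σ) lam) ∧
      (∀ (l l' lam lam' : Fin n → ℝ),
        lam ∈ permutahedron σ →
        IsMaxOn (fun x => dotp x l - ν * Om x) (permutahedron σ) lam →
        lam' ∈ permutahedron σ →
        IsMaxOn (fun x => dotp x l' - ν * Om x) (permutahedron σ) lam' →
        N (lam - lam') ≤ dualNorm N (l - l') / ν)) := by
  refine ⟨fun p q _ hpq l l' => ?_, fun N hN0 hNd hNh hNt hOm hsc => ?_⟩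
  · have : p.HolderConjugate q := ENNReal.holderConjugate_iff.2 (by simpa only [one_div] using hpq)
    exact abs_smoothedMax_sub_le σ Om ν p q l l'
  have hP := convex_permutahedron σ
  obtain ⟨c, hc, hcN⟩ := exists_pos_mul_norm_le hN0 hNd hNh hNt
  refine ⟨fun l => ?_, fun l l' lam lam' hlam hmax hlam' hmax' => ?_⟩
  · obtain ⟨lam, hlam, hmax⟩ := exists_isMaxOn_permutahedron σ hOm ν l
    refine ⟨lam, ⟨hlam, hmax⟩, fun lam' ⟨hlam', hmax'⟩ => ?_⟩
    have h := StrongConvexWrt.mul_sq_le_dotp_sub hsc hNh hOm hν.le hP hlam' hmax' hlam hmax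
    rw [sub_self, dotp_eq_dotProduct, zero_dotProduct] at h
    have hsq : N (lam' - lam) ^ 2 ≤ 0 := le_of_mul_le_mul_left (h.trans_eq (mul_zero ν).symm) hν
    have hN : N (lam' - lam) = 0 := by nlinarith [hN0 (lam' - lam)]
    exact sub_eq_zero.1 (hNd _ hN)
  · have h := (StrongConvexWrt.mul_sq_le_dotp_sub hsc hNh hOm hν.le hP hlam hmax hlam' hmax').trans
      (dotp_le_mul_dualNorm hc hcN hNh (l - l') (lam - lam'))
    rw [le_div_iff₀ hν]
    nlinarith [hN0 (lam - lam'), dualNorm_nonneg hc hcN hNh (l - l')]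

/-- (i) `h_{νΩ}` is `‖σ‖_p`-Lipschitz w.r.t. `‖·‖_{p'}` for every
`p ∈ [1,∞]` with Hölder conjugate `p'` (`1/p + 1/p' = 1` in `ℝ≥0∞`).
(ii) If `Ω` is convex and 1-strongly convex w.r.t. a norm `N`, then the maximizer
`λ_ν(l) = argmax_{λ ∈ P(σ)} {⟨λ, l⟩ − νΩ(λ)}` is unique for each `l` and satisfies
`N(λ_ν(l) − λ_ν(l')) ≤ ‖l − l'‖_* / ν`. -/
theorem stmt12 {n : ℕ} (σ : Fin n → ℝ) (hσ_nonneg : ∀ i, 0 ≤ σ i)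
    (Om : (Fin n → ℝ) → ℝ) (ν : ℝ) (hν : 0 < ν) :
    (∀ p q : ℝ≥0∞, 1 ≤ p → 1 / p + 1 / q = 1 → ∀ l l' : Fin n → ℝ,
      |smoothedMax σ Om ν l - smoothedMax σ Om ν l'| ≤
        ‖(WithLp.equiv p (Fin n → ℝ)).symm σ‖ *
          ‖(WithLp.equiv q (Fin n → ℝ)).symm (l - l')‖) ∧
    (∀ N : (Fin n → ℝ) → ℝ,
      (∀ x, 0 ≤ N x) →
      (∀ x, N x = 0 → x = 0) →
      (∀ (c : ℝ) (x), N (c • x) = |c| * N x) →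
      (∀ x y, N (x + y) ≤ N x + N y) →
      ConvexOn ℝ Set.univ Om →
      (∀ x y g, g ∈ subgrad Om x → Om x + dotp g (y - x) + N (y - x) ^ 2 / 2 ≤ Om y) →
      (∀ l : Fin n → ℝ, ∃! lam, lam ∈ permutahedron σ ∧
        IsMaxOn (fun x => dotp x l - ν * Om x) (permutahedron σ) lam) ∧
      (∀ (l l' lam lam' : Fin n → ℝ),
        lam ∈ permutahedron σ →
        IsMaxOn (fun x => dotp x l - ν * Om x) (permutahedron σ) lam →
        lam' ∈ permutahedron σ →
        IsMaxOn (fun x => dotp x l' - ν * Om x) (permutahedron σ) lam' →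
        N (lam - lam') ≤ dualNorm N (l - l') / ν)) :=
  stmt12_general σ Om ν hν
end

section
/- Let X ⊆ ℝ^d and Y ⊆ ℝ^p be closed convex sets, and let f : X × Y → ℝ be continuously differentiable. Suppose that for each y ∈ Y the function x ↦ f(x, y) is μ-strongly convex (μ > 0), and that for each x ∈ X the map y ↦ ∇_x f(x, y) is L_{x,y}-Lipschitz continuous. Then the map x*(y) := argmin_{x ∈ X} f(x, y) is well-defined (the minimizer exists and is unique for each y ∈ Y) and is (L_{x,y}/μ)-Lipschitz continuous: ‖x*(y₁) − x*(y₂)‖ ≤ (L_{x,y}/μ)‖y₁ − y₂‖ for all y₁, y₂ ∈ Y. -/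
/-!
A strongly convex differentiable function `g` lies above its tangent plus `μ/2 ‖·‖²`; this makes
it coercive (so it attains its minimum on a closed set), strictly convex (so the minimizer is
unique), and makes `∇g` strongly monotone. If `x₁` minimizes `g₁` and `x₂` minimizes `g₂` over the
same convex set, adding the two variational inequalities to the strong monotonicity of `∇g₁`
gives `μ ‖x₁ - x₂‖² ≤ ⟪∇g₂ x₂ - ∇g₁ x₂, x₁ - x₂⟫`, and for `gᵢ = f(·, yᵢ)` the Lipschitz bound
on `y ↦ ∇ₓ f(x₂, y)` finishes the proof.
-/

open scoped NNReal InnerProductSpace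
open Set Filter

theorem ConvexOn.add_fderiv_sub_le {F : Type*} [NormedAddCommGroup F] [NormedSpace ℝ F]
    {s : Set F} {g : F → ℝ} {g' : F →L[ℝ] ℝ} {x y : F}
    (hg : ConvexOn ℝ s g) (hx : x ∈ s) (hy : y ∈ s) (hg' : HasFDerivAt g g' x) :
    g x + g' (y - x) ≤ g y := by
  have hline : ConvexOn ℝ (Icc (0 : ℝ) 1) (g ∘ AffineMap.lineMap x y) :=
    (hg.comp_affineMap _).subset (fun t ht => hg.1.lineMap_mem hx hy ht) (convex_Icc 0 1)
  have hderiv : HasDerivAt (g ∘ AffineMap.lineMap x y) (g' (y - x)) (0 : ℝ) :=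
    hg'.comp_hasDerivAt_of_eq 0 AffineMap.hasDerivAt_lineMap (by simp)
  have := hline.le_slope_of_hasDerivAt (by simp) (by simp) zero_lt_one hderiv
  simp only [slope_def_field, Function.comp_apply, AffineMap.lineMap_apply_one,
    AffineMap.lineMap_apply_zero, sub_zero, div_one] at this
  linarith

variable {E : Type*} [NormedAddCommGroup E] [InnerProductSpace ℝ E] [CompleteSpace E]
  {s : Set E} {m : ℝ} {g : E → ℝ}

theorem StrongConvexOn.add_inner_add_le {x y G : E}
    (hg : StrongConvexOn s m g) (hx : x ∈ s) (hy : y ∈ s) (hG : HasGradientAt g G x) :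
    g x + ⟪G, y - x⟫_ℝ + m / 2 * ‖y - x‖ ^ 2 ≤ g y := by
  have hderiv := hG.hasFDerivAt.sub ((hasStrictFDerivAt_norm_sq x).hasFDerivAt.const_mul (m / 2))
  have := (strongConvexOn_iff_convex.1 hg).add_fderiv_sub_le hx hy hderiv
  simp only [sub_apply, smul_apply, InnerProductSpace.toDual_apply_apply, innerSL_apply_apply,
    smul_eq_mul, nsmul_eq_mul, Nat.cast_ofNat, inner_sub_right, real_inner_self_eq_norm_sq] at this
  rw [norm_sub_sq_real, real_inner_comm x y, inner_sub_right]
  linarith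

theorem StrongConvexOn.mul_norm_sub_sq_le_inner {x y G H : E}
    (hg : StrongConvexOn s m g) (hx : x ∈ s) (hy : y ∈ s)
    (hG : HasGradientAt g G x) (hH : HasGradientAt g H y) :
    m * ‖x - y‖ ^ 2 ≤ ⟪G - H, x - y⟫_ℝ := by
  have hxy := hg.add_inner_add_le hx hy hG
  have hyx := hg.add_inner_add_le hy hx hH
  rw [norm_sub_rev] at hxy
  simp only [inner_sub_left, inner_sub_right] at hxy hyx ⊢
  linarith

theorem IsMinOn.inner_gradient_nonneg {x y G : E} (hs : Convex ℝ s) (hmin : IsMinOn g s x)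
    (hx : x ∈ s) (hy : y ∈ s) (hG : HasGradientAt g G x) :
    0 ≤ ⟪G, y - x⟫_ℝ := by
  have := hmin.localize.hasFDerivWithinAt_nonneg hG.hasFDerivAt.hasFDerivWithinAt
    (sub_mem_posTangentConeAt_of_segment_subset (hs.segment_subset hx hy))
  simpa using this

theorem StrongConvexOn.exists_isMinOn [ProperSpace E] (hm : 0 < m) (hg : StrongConvexOn s m g)
    (hs : IsClosed s) (hne : s.Nonempty) (hdiff : ∀ x ∈ s, DifferentiableAt ℝ g x) :
    ∃ x ∈ s, IsMinOn g s x := by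
  obtain ⟨x₀, hx₀⟩ := hne
  set C := ‖gradient g x₀‖
  -- `g x ≥ g x₀ - C r + m/2 r²` with `r = ‖x - x₀‖`, which is `≥ g x₀` once `r ≥ 2C/m`.
  refine ContinuousOn.exists_isMinOn' (fun x hx => (hdiff x hx).continuousAt.continuousWithinAt)
    hs hx₀ ?_
  have hfar : ∀ᶠ x in cocompact E, 2 * C / m ≤ dist x x₀ :=
    (tendsto_dist_right_cocompact_atTop x₀).eventually_ge_atTop _
  filter_upwards [inf_le_left (b := 𝓟 s) hfar, inf_le_right (a := cocompact E) (mem_principal_self s)]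
    with x hxfar hx
  have hgrowth := hg.add_inner_add_le hx₀ hx (hdiff x₀ hx₀).hasGradientAt
  have hcs : -(C * ‖x - x₀‖) ≤ ⟪gradient g x₀, x - x₀⟫_ℝ :=
    neg_le_of_abs_le (abs_real_inner_le_norm _ _)
  rw [dist_eq_norm, div_le_iff₀' hm] at hxfar
  nlinarith [norm_nonneg (x - x₀)]

theorem StrongConvexOn.existsUnique_isMinOn [ProperSpace E] (hm : 0 < m)
    (hg : StrongConvexOn s m g) (hs : IsClosed s) (hne : s.Nonempty)
    (hdiff : ∀ x ∈ s, DifferentiableAt ℝ g x) :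
    ∃! x, x ∈ s ∧ IsMinOn g s x := by
  obtain ⟨x, hx, hmin⟩ := hg.exists_isMinOn hm hs hne hdiff
  exact ⟨x, ⟨hx, hmin⟩, fun y ⟨hy, hmin'⟩ => (hg.strictConvexOn hm).eq_of_isMinOn hmin' hmin hy hx⟩

theorem StrongConvexOn.mul_norm_sub_le_of_isMinOn {g₂ : E → ℝ} {x₁ x₂ G₁ G₂ H : E}
    (hg : StrongConvexOn s m g) (hs : Convex ℝ s)
    (hx₁ : x₁ ∈ s) (hmin₁ : IsMinOn g s x₁) (hx₂ : x₂ ∈ s) (hmin₂ : IsMinOn g₂ s x₂)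
    (hG₁ : HasGradientAt g G₁ x₁) (hG₂ : HasGradientAt g G₂ x₂) (hH : HasGradientAt g₂ H x₂) :
    m * ‖x₁ - x₂‖ ≤ ‖H - G₂‖ := by
  have hmono := hg.mul_norm_sub_sq_le_inner hx₁ hx₂ hG₁ hG₂
  have hvar₁ := hmin₁.inner_gradient_nonneg hs hx₁ hx₂ hG₁
  have hvar₂ := hmin₂.inner_gradient_nonneg hs hx₂ hx₁ hH
  have key : m * ‖x₁ - x₂‖ ^ 2 ≤ ‖H - G₂‖ * ‖x₁ - x₂‖ :=
    calc m * ‖x₁ - x₂‖ ^ 2 ≤ ⟪H - G₂, x₁ - x₂⟫_ℝ := by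
          simp only [inner_sub_left, inner_sub_right] at hmono hvar₁ hvar₂ ⊢
          linarith
      _ ≤ ‖H - G₂‖ * ‖x₁ - x₂‖ := real_inner_le_norm _ _
  rcases (norm_nonneg (x₁ - x₂)).eq_or_lt with h | h
  · rw [← h, mul_zero]; exact norm_nonneg _
  · rw [sq, ← mul_assoc] at key
    exact le_of_mul_le_mul_right key h

theorem stmt16_general {d p : ℕ}
    (X : Set (EuclideanSpace ℝ (Fin d))) (Y : Set (EuclideanSpace ℝ (Fin p)))
    (hXc : IsClosed X) (hXconv : Convex ℝ X) (hXne : X.Nonempty)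
    (f : EuclideanSpace ℝ (Fin d) × EuclideanSpace ℝ (Fin p) → ℝ)
    (μ : ℝ) (hμ : 0 < μ)
    (hstrong : ∀ y ∈ Y, StrongConvexOn X μ (fun x => f (x, y)))
    (gx : EuclideanSpace ℝ (Fin d) → EuclideanSpace ℝ (Fin p) → EuclideanSpace ℝ (Fin d))
    (hgx : ∀ x y, HasGradientAt (fun x' => f (x', y)) (gx x y) x)
    (Lxy : ℝ≥0)
    (hLip : ∀ x ∈ X, LipschitzOnWith Lxy (fun y => gx x y) Y) :
    (∀ y ∈ Y, ∃! x, x ∈ X ∧ IsMinOn (fun x' => f (x', y)) X x) ∧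
    (∀ y₁ ∈ Y, ∀ y₂ ∈ Y, ∀ x₁ x₂ : EuclideanSpace ℝ (Fin d),
      x₁ ∈ X → IsMinOn (fun x' => f (x', y₁)) X x₁ →
      x₂ ∈ X → IsMinOn (fun x' => f (x', y₂)) X x₂ →
      ‖x₁ - x₂‖ ≤ (Lxy : ℝ) / μ * ‖y₁ - y₂‖) := by
  refine ⟨fun y hy => (hstrong y hy).existsUnique_isMinOn hμ hXc hXne
    fun x _ => (hgx x y).differentiableAt, ?_⟩
  intro y₁ hy₁ y₂ hy₂ x₁ x₂ hx₁ hmin₁ hx₂ hmin₂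
  rw [div_mul_eq_mul_div, le_div_iff₀' hμ]
  calc μ * ‖x₁ - x₂‖ ≤ ‖gx x₂ y₂ - gx x₂ y₁‖ :=
        (hstrong y₁ hy₁).mul_norm_sub_le_of_isMinOn hXconv hx₁ hmin₁ hx₂ hmin₂
          (hgx x₁ y₁) (hgx x₂ y₁) (hgx x₂ y₂)
    _ ≤ Lxy * ‖y₂ - y₁‖ := by
        simpa only [dist_eq_norm] using (hLip x₂ hx₂).dist_le_mul y₂ hy₂ y₁ hy₁
    _ = Lxy * ‖y₁ - y₂‖ := by rw [norm_sub_rev]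

/-- If `f : X × Y → ℝ` is continuously differentiable, `f(·, y)` is
`μ`-strongly convex on the closed convex set `X` for each `y ∈ Y`, and `y ↦ ∇ₓf(x, y)` is
`L`-Lipschitz on the closed convex set `Y` for each `x ∈ X`, then the minimizer map
`x*(y) = argmin_{x ∈ X} f(x, y)` is well-defined (exists and is unique) and `(L/μ)`-Lipschitz. -/
theorem stmt16 {d p : ℕ}
    (X : Set (EuclideanSpace ℝ (Fin d))) (Y : Set (EuclideanSpace ℝ (Fin p)))
    (hXc : IsClosed X) (hXconv : Convex ℝ X) (hXne : X.Nonempty)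
    (hYc : IsClosed Y) (hYconv : Convex ℝ Y)
    (f : EuclideanSpace ℝ (Fin d) × EuclideanSpace ℝ (Fin p) → ℝ)
    (hf : ContDiff ℝ 1 f)
    (μ : ℝ) (hμ : 0 < μ)
    (hstrong : ∀ y ∈ Y, StrongConvexOn X μ (fun x => f (x, y)))
    (gx : EuclideanSpace ℝ (Fin d) → EuclideanSpace ℝ (Fin p) → EuclideanSpace ℝ (Fin d))
    (hgx : ∀ x y, HasGradientAt (fun x' => f (x', y)) (gx x y) x)
    (Lxy : ℝ≥0)
    (hLip : ∀ x ∈ X, LipschitzOnWith Lxy (fun y => gx x y) Y) :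
    (∀ y ∈ Y, ∃! x, x ∈ X ∧ IsMinOn (fun x' => f (x', y)) X x) ∧
    (∀ y₁ ∈ Y, ∀ y₂ ∈ Y, ∀ x₁ x₂ : EuclideanSpace ℝ (Fin d),
      x₁ ∈ X → IsMinOn (fun x' => f (x', y₁)) X x₁ →
      x₂ ∈ X → IsMinOn (fun x' => f (x', y₂)) X x₂ →
      ‖x₁ - x₂‖ ≤ (Lxy : ℝ) / μ * ‖y₁ - y₂‖) :=
  stmt16_general X Y hXc hXconv hXne f μ hμ hstrong gx hgx Lxy hLip
end
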